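/- arXiv:2204.06300 — 7 statements merged into one kernel-verified Lean document; each statement's English description precedes it below -/
import Mathlib

section
/- Let X be a finite-dimensional (real) Banach space. Then the closed unit ball B_X of X is plastic; that is, every non-expansive bijection F : B_X → B_X is an isometry. -/
/-!
A surjective non-expansive self-map `f` of a compact metric space is an isometry. Choose a
right inverse `g` of `f`; it is non-contracting. Compactness makes every pair `(x, y)` recurrent
under `g × g`: some iterate `(gᵏ⁺¹ x, gᵏ⁺¹ y)` is arbitrarily close to `(x, y)`, and then
`dist x y ≤ dist (gᵏ x) (gᵏ y) = dist (f (gᵏ⁺¹ x)) (f (gᵏ⁺¹ y))`, which tends to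
`dist (f x) (f y)`. The closed unit ball of a finite-dimensional space is compact.
-/

open Function Metric Set

section

variable {K : Type*} [PseudoMetricSpace K]

theorem exists_lt_dist_lt_of_compactSpace [CompactSpace K] (u : ℕ → K) {ε : ℝ} (hε : 0 < ε) :
    ∃ m n, m < n ∧ dist (u n) (u m) < ε := by
  obtain ⟨_, φ, hφ, hconv⟩ := CompactSpace.tendsto_subseq u
  obtain ⟨N, hN⟩ := Metric.cauchySeq_iff'.mp hconv.cauchySeq ε hε
  exact ⟨φ N, φ (N + 1), hφ N.lt_succ_self, hN (N + 1) N.le_succ⟩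

theorem dist_le_dist_iterate {g : K → K} (hg : ∀ x y, dist x y ≤ dist (g x) (g y)) (n : ℕ)
    (x y : K) : dist x y ≤ dist (g^[n] x) (g^[n] y) := by
  induction n generalizing x y with
  | zero => exact le_rfl
  | succ n ih => exact (hg x y).trans (ih (g x) (g y))

theorem mem_closure_range_iterate_succ [CompactSpace K] {g : K → K}
    (hg : ∀ x y, dist x y ≤ dist (g x) (g y)) (z : K) :
    z ∈ closure (range fun k => g^[k + 1] z) := by
  refine mem_closure_range_iff.mpr fun ε hε => ?_
  obtain ⟨m, n, hmn, hdist⟩ := exists_lt_dist_lt_of_compactSpace (fun n => g^[n] z) hε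
  obtain ⟨k, rfl⟩ := Nat.exists_eq_add_of_lt hmn
  refine ⟨k, ?_⟩
  calc dist z (g^[k + 1] z) ≤ dist (g^[m] z) (g^[m] (g^[k + 1] z)) := dist_le_dist_iterate hg m _ _
    _ = dist (g^[m + k + 1] z) (g^[m] z) := by rw [dist_comm, ← iterate_add_apply, add_assoc]
    _ < ε := hdist

theorem isometry_of_surjective_of_dist_le [CompactSpace K] {f : K → K} (hsurj : Surjective f)
    (hf : ∀ x y, dist (f x) (f y) ≤ dist x y) : Isometry f := by
  refine Isometry.of_dist_eq fun x y => le_antisymm (hf x y) ?_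
  set g := surjInv hsurj
  have hg : ∀ a b, dist a b ≤ dist (g a) (g b) := fun a b => by
    simpa only [g, surjInv_eq] using hf (g a) (g b)
  have hgg : ∀ p q : K × K, dist p q ≤ dist (Prod.map g g p) (Prod.map g g q) := fun p q =>
    max_le_max (hg p.1 q.1) (hg p.2 q.2)
  have hf_cont : Continuous f := (LipschitzWith.of_dist_le' (K := 1) (by simpa using hf)).continuous
  have hclosed : IsClosed {p : K × K | dist x y ≤ dist (f p.1) (f p.2)} :=
    isClosed_le continuous_const (by fun_prop)
  refine hclosed.closure_subset_iff.mpr ?_ (mem_closure_range_iterate_succ hgg (x, y))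
  rintro _ ⟨k, rfl⟩
  simp only [Prod.map_iterate, Prod.map_apply, mem_ofPred_eq, iterate_succ_apply', g, surjInv_eq]
  exact dist_le_dist_iterate hg k x y

theorem IsCompact.dist_eq_of_mapsTo_of_surjOn {s : Set K} (hs : IsCompact s) {f : K → K}
    (hmaps : MapsTo f s s) (hsurj : SurjOn f s s)
    (hf : ∀ x ∈ s, ∀ y ∈ s, dist (f x) (f y) ≤ dist x y) :
    ∀ x ∈ s, ∀ y ∈ s, dist (f x) (f y) = dist x y := by
  have : CompactSpace s := isCompact_iff_compactSpace.mp hs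
  have hiso := isometry_of_surjective_of_dist_le (hmaps.restrict_surjective_iff.mpr hsurj)
    fun x y => hf x x.2 y y.2
  exact fun x hx y hy => hiso.dist_eq ⟨x, hx⟩ ⟨y, hy⟩

end

theorem unit_ball_of_finiteDimensional_is_plastic_general
    {X : Type*} [NormedAddCommGroup X] [NormedSpace ℝ X]
    [FiniteDimensional ℝ X]
    (F : X → X)
    (hF : Set.BijOn F (Metric.closedBall (0 : X) 1) (Metric.closedBall (0 : X) 1))
    (hne : ∀ x ∈ Metric.closedBall (0 : X) 1, ∀ y ∈ Metric.closedBall (0 : X) 1,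
      dist (F x) (F y) ≤ dist x y) :
    ∀ x ∈ Metric.closedBall (0 : X) 1, ∀ y ∈ Metric.closedBall (0 : X) 1,
      dist (F x) (F y) = dist x y :=
  (isCompact_closedBall 0 1).dist_eq_of_mapsTo_of_surjOn hF.mapsTo hF.surjOn hne

/-- Let `X` be a finite-dimensional real Banach space. Then the closed
unit ball of `X` is plastic: every non-expansive bijection of the ball onto itself is
an isometry. -/
theorem unit_ball_of_finiteDimensional_is_plastic
    {X : Type*} [NormedAddCommGroup X] [NormedSpace ℝ X]
    [FiniteDimensional ℝ X] [CompleteSpace X]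
    (F : X → X)
    (hF : Set.BijOn F (Metric.closedBall (0 : X) 1) (Metric.closedBall (0 : X) 1))
    (hne : ∀ x ∈ Metric.closedBall (0 : X) 1, ∀ y ∈ Metric.closedBall (0 : X) 1,
      dist (F x) (F y) ≤ dist x y) :
    ∀ x ∈ Metric.closedBall (0 : X) 1, ∀ y ∈ Metric.closedBall (0 : X) 1,
      dist (F x) (F y) = dist x y :=
  unit_ball_of_finiteDimensional_is_plastic_general F hF hne
end

section
/- Let A be a bounded self-adjoint operator on a separable infinite-dimensional Hilbert space H with inf_{‖x‖=1} ⟨Ax, x⟩ > 0, and let E = {x ∈ H : ⟨x, Ax⟩ ≤ 1} be the ellipsoid generated by A. Suppose the set of eigenvalues of A contains a subset B with the following properties: (1) B has at least two elements; (2) either B has no minimum, or the minimum of B is an eigenvalue whose eigenspace is infinite-dimensional; (3) either B has no maximum, or the maximum of B is an eigenvalue whose eigenspace is infinite-dimensional. Then E is not LEC-plastic; that is, there exists a linear operator T : H → H whose restriction to E is a non-expansive bijection from E onto E but which is not an isometry on E. -/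
/-!
Pick eigenvalues of `B` forming a monotone two-sided sequence `μ n` with `μ 0 < μ 1`, together
with orthonormal eigenvectors `g n`: values of `B` are taken at most once, except the minimum and
maximum of `B`, which are repeated infinitely often and have infinite-dimensional eigenspaces.
The weighted shift `g n ↦ √(μ n / μ (n + 1)) • g (n + 1)`, extended by the identity on the
orthogonal complement of the `g n`, preserves `⟪x, A x⟫`, so it maps the ellipsoid bijectively
onto itself; the positive lower bound of `A` keeps the weights away from `0`, which makes the
shift surjective. Its weights are at most `1`, so it is non-expansive, but it shrinks `g 0`
strictly.
-/

/-- A subset `M` of a normed space `X` is LEC-plastic (linearly expand-contract plastic)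
if every linear operator `T : X → X` whose restriction to `M` is a non-expansive bijection
from `M` onto `M` is an isometry on `M`. -/
def IsLECPlastic (𝕜 : Type*) {X : Type*} [NontriviallyNormedField 𝕜]
    [NormedAddCommGroup X] [NormedSpace 𝕜 X] (M : Set X) : Prop :=
  ∀ T : X →ₗ[𝕜] X, Set.BijOn T M M →
    (∀ x ∈ M, ∀ y ∈ M, ‖T x - T y‖ ≤ ‖x - y‖) →
    (∀ x ∈ M, ∀ y ∈ M, ‖T x - T y‖ = ‖x - y‖)

open scoped InnerProductSpace
open RCLike

theorem summable_norm_mul_sq {ι 𝕜 : Type*} [RCLike 𝕜] {a c : ι → 𝕜} {C : ℝ}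
    (ha : ∀ i, ‖a i‖ ≤ C) (hc : Summable fun i => ‖c i‖ ^ 2) :
    Summable fun i => ‖a i * c i‖ ^ 2 := by
  refine .of_nonneg_of_le (fun _ => by positivity) (fun i => ?_) (hc.mul_left (C ^ 2))
  rw [norm_mul, mul_pow]
  gcongr
  exact ha i

section OrthonormalSeries

variable {𝕜 H ι : Type*} [RCLike 𝕜] [NormedAddCommGroup H] [InnerProductSpace 𝕜 H] {g : ι → H}

theorem inner_tsum_right {f : ι → H} (x : H) (hf : Summable f) :
    ⟪x, ∑' i, f i⟫_𝕜 = ∑' i, ⟪x, f i⟫_𝕜 := by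
  simpa only [innerSL_apply_apply] using (innerSL 𝕜 x).map_tsum hf

theorem abs_le_opNorm_of_unit_eigenvector {A : H →L[𝕜] H} {v : H} {μ : ℝ} (hv : ‖v‖ = 1)
    (hAv : A v = (μ : 𝕜) • v) : |μ| ≤ ‖A‖ := by
  simpa [hAv, norm_smul, hv] using A.le_opNorm v

theorem re_inner_apply_self_of_unit_eigenvector {A : H →L[𝕜] H} {v : H} {μ : ℝ}
    (hv : ‖v‖ = 1) (hAv : A v = (μ : 𝕜) • v) : re ⟪A v, v⟫_𝕜 = μ := by
  simp [hAv, inner_smul_left, inner_self_eq_norm_sq_to_K, hv]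

theorem re_inner_smul_apply_of_unit_eigenvector {A : H →L[𝕜] H} {v : H} {μ : ℝ}
    (hv : ‖v‖ = 1) (hAv : A v = (μ : 𝕜) • v) (t : ℝ) :
    re ⟪(t : 𝕜) • v, A ((t : 𝕜) • v)⟫_𝕜 = t ^ 2 * μ := by
  simp [hAv, inner_smul_left, inner_smul_right, inner_self_eq_norm_sq_to_K, hv]
  ring

variable [CompleteSpace H]

theorem Orthonormal.summable_smul (hg : Orthonormal 𝕜 g) {c : ι → 𝕜}
    (hc : Summable fun i => ‖c i‖ ^ 2) : Summable fun i => c i • g i := by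
  simpa [LinearIsometry.toSpanSingleton] using
    (hg.orthogonalFamily.summable_iff_norm_sq_summable c).2 hc

theorem Orthonormal.inner_tsum_smul (hg : Orthonormal 𝕜 g) {c : ι → 𝕜}
    (hc : Summable fun i => ‖c i‖ ^ 2) (j : ι) : ⟪g j, ∑' i, c i • g i⟫_𝕜 = c j := by
  rw [inner_tsum_right _ (hg.summable_smul hc), tsum_eq_single j fun i hi => ?_]
  · simp [inner_smul_right, inner_self_eq_norm_sq_to_K, hg.norm_eq_one]
  · simp [inner_smul_right, hg.inner_eq_zero (Ne.symm hi)]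

theorem Orthonormal.inner_sub_tsum_inner_smul (hg : Orthonormal 𝕜 g) (x : H) (j : ι) :
    ⟪g j, x - ∑' i, ⟪g i, x⟫_𝕜 • g i⟫_𝕜 = 0 := by
  rw [inner_sub_right, hg.inner_tsum_smul (hg.inner_products_summable x), sub_self]

theorem IsSelfAdjoint.re_inner_add_tsum_smul {A : H →L[𝕜] H} (hA : IsSelfAdjoint A)
    (hg : Orthonormal 𝕜 g) {μ : ι → ℝ} (hgμ : ∀ i, A (g i) = (μ i : 𝕜) • g i)
    {c : ι → 𝕜} (hc : Summable fun i => ‖c i‖ ^ 2) {w : H} (hw : ∀ i, ⟪g i, w⟫_𝕜 = 0) :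
    re ⟪w + ∑' i, c i • g i, A (w + ∑' i, c i • g i)⟫_𝕜
      = re ⟪w, A w⟫_𝕜 + ∑' i, μ i * ‖c i‖ ^ 2 := by
  have hμc : Summable fun i => ‖(μ i : 𝕜) * c i‖ ^ 2 :=
    summable_norm_mul_sq (fun i => by
      simpa using abs_le_opNorm_of_unit_eigenvector (hg.norm_eq_one i) (hgμ i)) hc
  set s := ∑' i, c i • g i
  have hAs : A s = ∑' i, ((μ i : 𝕜) * c i) • g i := by
    rw [A.map_tsum (hg.summable_smul hc)]
    simp only [map_smul, hgμ, smul_smul, mul_comm]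
  have hwAs : ⟪w, A s⟫_𝕜 = 0 := by
    simp [hAs, inner_tsum_right _ (hg.summable_smul hμc), inner_smul_right,
      inner_eq_zero_symm.mp (hw _)]
  have hsAw : ⟪s, A w⟫_𝕜 = 0 := by
    have := hA.isSymmetric s w
    simp only [ContinuousLinearMap.coe_coe] at this
    rw [← this, inner_eq_zero_symm, hwAs]
  have hsAs : ⟪s, A s⟫_𝕜 = ∑' i, ((μ i * ‖c i‖ ^ 2 : ℝ) : 𝕜) := by
    rw [hAs, inner_tsum_right _ (hg.summable_smul hμc)]
    congr 1 with i
    rw [inner_smul_right, ← inner_conj_symm, hg.inner_tsum_smul hc, mul_assoc, mul_conj]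
    push_cast
    ring
  rw [map_add, inner_add_left, inner_add_right, inner_add_right, hwAs, hsAw, hsAs,
    ← ofReal_tsum, add_zero, zero_add, map_add, ofReal_re]

theorem Orthonormal.norm_add_tsum_smul_sq (hg : Orthonormal 𝕜 g) {c : ι → 𝕜}
    (hc : Summable fun i => ‖c i‖ ^ 2) {w : H} (hw : ∀ i, ⟪g i, w⟫_𝕜 = 0) :
    ‖w + ∑' i, c i • g i‖ ^ 2 = ‖w‖ ^ 2 + ∑' i, ‖c i‖ ^ 2 := by
  simpa [inner_self_eq_norm_sq] using
    (show IsSelfAdjoint (1 : H →L[𝕜] H) from .one _).re_inner_add_tsum_smul hg (μ := 1)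
      (by simp) hc hw

theorem isLinearMap_tsum_inner_smul {h : ι → H} (hg : Orthonormal 𝕜 g) (hh : Orthonormal 𝕜 h)
    {a : ι → 𝕜} {C : ℝ} (ha : ∀ i, ‖a i‖ ≤ C) :
    IsLinearMap 𝕜 fun x => ∑' i, (a i * ⟪g i, x⟫_𝕜) • h i := by
  have hs : ∀ x, Summable fun i => (a i * ⟪g i, x⟫_𝕜) • h i := fun x =>
    hh.summable_smul (summable_norm_mul_sq ha (hg.inner_products_summable x))
  constructor
  · intro x y
    rw [← (hs x).tsum_add (hs y)]
    simp only [inner_add_right, mul_add, add_smul]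
  · intro c x
    rw [← (hs x).tsum_const_smul c]
    simp only [inner_smul_right, smul_smul, mul_left_comm]

end OrthonormalSeries

section WeightedShift

variable {𝕜 H : Type*} [RCLike 𝕜] [NormedAddCommGroup H] [InnerProductSpace 𝕜 H]

variable (𝕜) in
noncomputable def weightedShift (g : ℤ → H) (r : ℤ → ℝ) (x : H) : H :=
  (x - ∑' n, ⟪g n, x⟫_𝕜 • g n) + ∑' n, ((r n : 𝕜) * ⟪g n, x⟫_𝕜) • g (n + 1)

variable {g : ℤ → H} {r : ℤ → ℝ}

theorem Orthonormal.comp_add_one (hg : Orthonormal 𝕜 g) : Orthonormal 𝕜 fun n => g (n + 1) :=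
  hg.comp _ (add_left_injective 1)

theorem summable_norm_ofReal_mul_inner_sq (hg : Orthonormal 𝕜 g) (hr : ∀ n, |r n| ≤ 1) (x : H) :
    Summable fun n => ‖(r n : 𝕜) * ⟪g n, x⟫_𝕜‖ ^ 2 :=
  summable_norm_mul_sq (C := 1) (by simpa using hr) (hg.inner_products_summable x)

theorem weightedShift_apply_self (hg : Orthonormal 𝕜 g) (n : ℤ) :
    weightedShift 𝕜 g r (g n) = (r n : 𝕜) • g (n + 1) := by
  classical
  have hcoef : ∀ m, ⟪g m, g n⟫_𝕜 = if m = n then 1 else 0 := fun m =>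
    orthonormal_iff_ite.mp hg m n
  rw [weightedShift, tsum_eq_single n, tsum_eq_single n] <;> simp_all [hg.norm_eq_one]

variable [CompleteSpace H]

theorem isLinearMap_weightedShift (hg : Orthonormal 𝕜 g) (hr : ∀ n, |r n| ≤ 1) :
    IsLinearMap 𝕜 (weightedShift 𝕜 g r) := by
  have hP := isLinearMap_tsum_inner_smul hg hg (a := 1) (C := 1) (by simp)
  have hV := isLinearMap_tsum_inner_smul hg hg.comp_add_one (a := fun n => (r n : 𝕜))
    (by simpa using hr)
  simp only [Pi.one_apply, one_mul] at hP
  constructor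
  · intro x y
    simp only [weightedShift, hP.map_add, hV.map_add]
    abel
  · intro c x
    simp only [weightedShift, hP.map_smul, hV.map_smul, smul_add, smul_sub]

theorem norm_weightedShift_le (hg : Orthonormal 𝕜 g) (hr : ∀ n, |r n| ≤ 1) (x : H) :
    ‖weightedShift 𝕜 g r x‖ ≤ ‖x‖ := by
  have hc := hg.inner_products_summable x
  have hw := hg.inner_sub_tsum_inner_smul x
  rw [← sq_le_sq₀ (norm_nonneg _) (norm_nonneg _), weightedShift,
    hg.comp_add_one.norm_add_tsum_smul_sq (summable_norm_ofReal_mul_inner_sq hg hr x)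
      fun n => hw _]
  conv_rhs => rw [← sub_add_cancel x (∑' n, ⟪g n, x⟫_𝕜 • g n), hg.norm_add_tsum_smul_sq hc hw]
  refine add_le_add_right ((summable_norm_ofReal_mul_inner_sq hg hr x).tsum_le_tsum
    (fun n => ?_) hc) _
  rw [norm_mul, mul_pow, norm_ofReal]
  exact mul_le_of_le_one_left (by positivity) (pow_le_one₀ (abs_nonneg _) (hr n))

theorem re_inner_weightedShift {A : H →L[𝕜] H} (hA : IsSelfAdjoint A) (hg : Orthonormal 𝕜 g)
    {μ : ℤ → ℝ} (hgμ : ∀ n, A (g n) = (μ n : 𝕜) • g n) (hr : ∀ n, |r n| ≤ 1)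
    (hμr : ∀ n, μ (n + 1) * r n ^ 2 = μ n) (x : H) :
    re ⟪weightedShift 𝕜 g r x, A (weightedShift 𝕜 g r x)⟫_𝕜 = re ⟪x, A x⟫_𝕜 := by
  have hc := hg.inner_products_summable x
  have hw := hg.inner_sub_tsum_inner_smul x
  rw [weightedShift, hA.re_inner_add_tsum_smul hg.comp_add_one (fun n => hgμ (n + 1))
    (summable_norm_ofReal_mul_inner_sq hg hr x) fun n => hw _]
  conv_rhs => rw [← sub_add_cancel x (∑' n, ⟪g n, x⟫_𝕜 • g n),
    hA.re_inner_add_tsum_smul hg hgμ hc hw]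
  congr 1
  refine tsum_congr fun n => ?_
  rw [norm_mul, mul_pow, norm_ofReal, sq_abs, ← mul_assoc, hμr]

theorem inner_weightedShift (hg : Orthonormal 𝕜 g) (hr : ∀ n, |r n| ≤ 1) (x : H) (n : ℤ) :
    ⟪g (n + 1), weightedShift 𝕜 g r x⟫_𝕜 = r n * ⟪g n, x⟫_𝕜 := by
  rw [weightedShift, inner_add_right, hg.inner_sub_tsum_inner_smul, zero_add,
    hg.comp_add_one.inner_tsum_smul (summable_norm_ofReal_mul_inner_sq hg hr x)]

theorem weightedShift_injective (hg : Orthonormal 𝕜 g) (hr : ∀ n, |r n| ≤ 1)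
    (hr₀ : ∀ n, r n ≠ 0) : Function.Injective (weightedShift 𝕜 g r) := by
  let T := IsLinearMap.mk' _ (isLinearMap_weightedShift hg hr)
  refine (injective_iff_map_eq_zero T).2 fun x hx => ?_
  have hgx : ∀ n, ⟪g n, x⟫_𝕜 = 0 := fun n => by
    have := inner_weightedShift hg hr x n
    rw [show weightedShift 𝕜 g r x = 0 from hx, inner_zero_right, eq_comm] at this
    simpa [hr₀ n] using this
  simpa [T, weightedShift, hgx] using hx

theorem weightedShift_surjective (hg : Orthonormal 𝕜 g) {δ : ℝ} (hδ : 0 < δ)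
    (hrδ : ∀ n, δ ≤ |r n|) : Function.Surjective (weightedShift 𝕜 g r) := by
  intro y
  set w := y - ∑' n, ⟪g n, y⟫_𝕜 • g n
  have hw : ∀ n, ⟪g n, w⟫_𝕜 = 0 := hg.inner_sub_tsum_inner_smul y
  have hr₀ : ∀ n, r n ≠ 0 := fun n => abs_pos.mp (hδ.trans_le (hrδ n))
  set b : ℤ → 𝕜 := fun n => ((r n)⁻¹ : 𝕜) * ⟪g (n + 1), y⟫_𝕜
  have hb : Summable fun n => ‖b n‖ ^ 2 :=
    summable_norm_mul_sq (C := δ⁻¹) (fun n => by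
      simpa using inv_anti₀ hδ (hrδ n)) (hg.comp_add_one.inner_products_summable y)
  have hcoef : ∀ n, ⟪g n, w + ∑' m, b m • g m⟫_𝕜 = b n := by
    simp only [inner_add_right, hw, zero_add, hg.inner_tsum_smul hb, implies_true]
  refine ⟨w + ∑' n, b n • g n, ?_⟩
  have hrb : ∀ n, (r n : 𝕜) * b n = ⟪g (n + 1), y⟫_𝕜 := fun n =>
    mul_inv_cancel_left₀ (ofReal_ne_zero.mpr (hr₀ n)) _
  rw [weightedShift]
  simp only [hcoef, hrb, add_sub_cancel_right]
  have hshift := (Equiv.addRight (1 : ℤ)).tsum_eq fun n => ⟪g n, y⟫_𝕜 • g n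
  simp only [Equiv.coe_addRight] at hshift
  rw [hshift, sub_add_cancel]

end WeightedShift

theorem not_isLECPlastic_of_contraction {𝕜 X : Type*} [NontriviallyNormedField 𝕜]
    [NormedAddCommGroup X] [NormedSpace 𝕜 X] {M : Set X} (T : X →ₗ[𝕜] X)
    (hT : Function.Bijective T) (hTM : ∀ x, T x ∈ M ↔ x ∈ M) (hle : ∀ x, ‖T x‖ ≤ ‖x‖)
    (h0 : (0 : X) ∈ M) {x₀ : X} (hx₀ : x₀ ∈ M) (hlt : ‖T x₀‖ < ‖x₀‖) : ¬ IsLECPlastic 𝕜 M := by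
  intro hM
  have hbij : Set.BijOn T M M := by
    refine ⟨fun x hx => (hTM x).2 hx, hT.injective.injOn, fun y hy => ?_⟩
    obtain ⟨x, rfl⟩ := hT.surjective y
    exact ⟨x, (hTM x).1 hy, rfl⟩
  have := hM T hbij (fun x _ y _ => by simpa only [← map_sub] using hle (x - y)) x₀ hx₀ 0 h0
  simp only [map_zero, sub_zero] at this
  exact hlt.ne this

theorem exists_shift_weights {μ : ℤ → ℝ} (hμ : Monotone μ) {c C : ℝ} (hc : 0 < c)
    (hcμ : ∀ n, c ≤ μ n) (hμC : ∀ n, μ n ≤ C) :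
    ∃ r : ℤ → ℝ, (∀ n, μ (n + 1) * r n ^ 2 = μ n) ∧ (∀ n, |r n| ≤ 1) ∧
      ∀ n, √(c / C) ≤ |r n| := by
  have hμ₀ : ∀ n, 0 < μ n := fun n => hc.trans_le (hcμ n)
  refine ⟨fun n => √(μ n / μ (n + 1)), fun n => ?_, fun n => ?_, fun n => ?_⟩ <;>
    simp only [abs_of_nonneg (Real.sqrt_nonneg _)]
  · rw [Real.sq_sqrt (div_pos (hμ₀ n) (hμ₀ _)).le, mul_div_cancel₀ _ (hμ₀ _).ne']
  · rw [Real.sqrt_le_one, div_le_one (hμ₀ _)]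
    exact hμ (by omega)
  · exact Real.sqrt_le_sqrt (div_le_div₀ (hμ₀ n).le (hcμ n) (hμ₀ _) (hμC _))

section Ellipsoid
variable {𝕜 H : Type*} [RCLike 𝕜] [NormedAddCommGroup H] [InnerProductSpace 𝕜 H]
  [CompleteSpace H]

theorem not_isLECPlastic_ellipsoid_of_orthonormal_eigenvectors {A : H →L[𝕜] H}
    (hA : IsSelfAdjoint A) {g : ℤ → H} (hg : Orthonormal 𝕜 g) {μ : ℤ → ℝ}
    (hgμ : ∀ n, A (g n) = (μ n : 𝕜) • g n) (hμ : Monotone μ) {c : ℝ} (hc : 0 < c)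
    (hcμ : ∀ n, c ≤ μ n) {n₀ : ℤ} (hn₀ : μ n₀ < μ (n₀ + 1)) :
    ¬ IsLECPlastic 𝕜 {x : H | re ⟪x, A x⟫_𝕜 ≤ 1} := by
  have hμ₀ : ∀ n, 0 < μ n := fun n => hc.trans_le (hcμ n)
  have hμA : ∀ n, μ n ≤ ‖A‖ := fun n =>
    (le_abs_self _).trans (abs_le_opNorm_of_unit_eigenvector (hg.norm_eq_one n) (hgμ n))
  obtain ⟨r, hμr, hr, hrδ⟩ := exists_shift_weights hμ hc hcμ hμA
  have hδ : 0 < √(c / ‖A‖) := Real.sqrt_pos.2 (div_pos hc ((hμ₀ 0).trans_le (hμA 0)))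
  have hrn₀ : |r n₀| < 1 := by
    rw [← sq_lt_one_iff_abs_lt_one]
    nlinarith [hμr n₀, hμ₀ (n₀ + 1)]
  set s : ℝ := (√(μ n₀))⁻¹
  have hs : 0 < s := inv_pos.2 (Real.sqrt_pos.2 (hμ₀ n₀))
  let T := IsLinearMap.mk' _ (isLinearMap_weightedShift hg hr)
  refine not_isLECPlastic_of_contraction T
    ⟨weightedShift_injective hg hr fun n => abs_pos.mp (hδ.trans_le (hrδ n)),
      weightedShift_surjective hg hδ hrδ⟩
    (fun x => by simp [T, re_inner_weightedShift hA hg hgμ hr hμr])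
    (norm_weightedShift_le hg hr) (by simp) (x₀ := (s : 𝕜) • g n₀) ?_ ?_
  · refine (le_of_eq ?_ : _ ≤ (1 : ℝ))
    rw [re_inner_smul_apply_of_unit_eigenvector (hg.norm_eq_one n₀) (hgμ n₀),
      inv_pow, Real.sq_sqrt (hμ₀ n₀).le, inv_mul_cancel₀ (hμ₀ n₀).ne']
  · have hTx₀ : T ((s : 𝕜) • g n₀) = (s : 𝕜) • (r n₀ : 𝕜) • g (n₀ + 1) :=
      (map_smul T _ _).trans (congrArg _ (weightedShift_apply_self hg n₀))
    rw [hTx₀, norm_smul, norm_smul, norm_smul, hg.norm_eq_one, hg.norm_eq_one, norm_ofReal,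
      norm_ofReal, abs_of_pos hs]
    nlinarith

end Ellipsoid

section Eigenvectors

open Module.End

variable {𝕜 H : Type*} [RCLike 𝕜] [NormedAddCommGroup H] [InnerProductSpace 𝕜 H]

theorem Submodule.exists_orthonormal_nat_of_not_finiteDimensional (K : Submodule 𝕜 H)
    (hK : ¬ FiniteDimensional 𝕜 K) : ∃ e : ℕ → H, Orthonormal 𝕜 e ∧ ∀ n, e n ∈ K := by
  let b := Module.Basis.ofVectorSpace 𝕜 K
  have : Infinite (Module.Basis.ofVectorSpaceIndex 𝕜 K) := by
    by_contra hfin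
    rw [not_infinite_iff_finite] at hfin
    exact hK b.finiteDimensional_of_finite
  let f : ℕ → K := b ∘ Infinite.natEmbedding _
  have hf : LinearIndependent 𝕜 f :=
    b.linearIndependent.comp _ (Infinite.natEmbedding _).injective
  let u : ℕ → K := InnerProductSpace.gramSchmidtNormed 𝕜 f
  exact ⟨fun n => u n,
    (InnerProductSpace.gramSchmidtNormed_orthonormal hf).comp_linearIsometry K.subtypeₗᵢ,
    fun n => (u n).2⟩

-- The implication sits inside the existential so that `choose` yields one family `𝕜 → ℕ → H`.
theorem exists_eigenvector_seq (A : H →ₗ[𝕜] H) (μ : 𝕜) :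
    ∃ e : ℕ → H, HasEigenvalue A μ → (∀ n, e n ∈ eigenspace A μ ∧ ‖e n‖ = 1) ∧
      (¬ FiniteDimensional 𝕜 (eigenspace A μ) → Orthonormal 𝕜 e) := by
  by_cases hfin : FiniteDimensional 𝕜 (eigenspace A μ)
  · by_cases hμ : HasEigenvalue A μ
    · obtain ⟨v, hv, hv0⟩ := hμ.exists_hasEigenvector
      exact ⟨fun _ => (‖v‖⁻¹ : 𝕜) • v, fun _ =>
        ⟨fun _ => ⟨Submodule.smul_mem _ _ hv, norm_smul_inv_norm hv0⟩, absurd hfin⟩⟩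
    · exact ⟨0, fun h => absurd h hμ⟩
  · obtain ⟨e, he, heK⟩ := (eigenspace A μ).exists_orthonormal_nat_of_not_finiteDimensional hfin
    exact ⟨e, fun _ => ⟨fun n => ⟨heK n, he.1 n⟩, fun _ => he⟩⟩

theorem IsSelfAdjoint.exists_orthonormal_eigenvectors [CompleteSpace H] {ι : Type*} [Countable ι]
    {A : H →L[𝕜] H} (hA : IsSelfAdjoint A) (μ : ι → ℝ)
    (hμ : ∀ i, HasEigenvalue (A : H →ₗ[𝕜] H) (μ i))
    (hfib : ∀ i j, i ≠ j → μ i = μ j →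
      ¬ FiniteDimensional 𝕜 (eigenspace (A : H →ₗ[𝕜] H) (μ i))) :
    ∃ g : ι → H, Orthonormal 𝕜 g ∧ ∀ i, A (g i) = (μ i : 𝕜) • g i := by
  obtain ⟨enc, henc⟩ := Countable.exists_injective_nat ι
  choose e he using fun ν : ℝ => exists_eigenvector_seq (A : H →ₗ[𝕜] H) ν
  refine ⟨fun i => e (μ i) (enc i), ⟨fun i => ((he _ (hμ i)).1 _).2, fun i j hij => ?_⟩,
    fun i => mem_eigenspace_iff.mp ((he _ (hμ i)).1 _).1⟩
  by_cases hμij : μ i = μ j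
  · have he_orth := (he _ (hμ i)).2 (hfib i j hij hμij)
    show ⟪e (μ i) (enc i), e (μ j) (enc j)⟫_𝕜 = 0
    rw [hμij] at he_orth ⊢
    exact he_orth.2 (henc.ne hij)
  · have := hA.isSymmetric.orthogonalFamily_eigenspaces (ofReal_injective.ne hμij)
      ⟨_, ((he _ (hμ i)).1 (enc i)).1⟩ ⟨_, ((he _ (hμ j)).1 (enc j)).1⟩
    simpa using this

end Eigenvectors

section Chains

variable {α : Type*} [LinearOrder α] {B : Set α}

theorem exists_antitone_seq_le_of_mem {p : α} (hp : p ∈ B) :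
    ∃ u : ℕ → α, Antitone u ∧ (∀ k, u k ∈ B) ∧ u 0 ≤ p ∧
      ∀ i j, i ≠ j → u i = u j → IsLeast B (u i) := by
  by_cases hmin : ∃ m, IsLeast B m
  · obtain ⟨m, hm⟩ := hmin
    exact ⟨fun _ => m, antitone_const, fun _ => hm.1, hm.2 hp, fun _ _ _ _ => hm⟩
  · have hstep : ∀ x : B, ∃ y : B, (y : α) < x := fun x => by
      by_contra! h
      exact hmin ⟨x, x.2, fun y hy => h ⟨y, hy⟩⟩
    choose F hF using hstep
    have hanti : StrictAnti fun k => (F^[k] ⟨p, hp⟩ : α) :=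
      strictAnti_nat_of_succ_lt fun k => by
        simpa only [Function.iterate_succ_apply'] using hF _
    exact ⟨_, hanti.antitone, fun k => (F^[k] ⟨p, hp⟩).2, le_rfl,
      fun i j hij h => absurd (hanti.injective h) hij⟩

theorem exists_monotone_seq_ge_of_mem {q : α} (hq : q ∈ B) :
    ∃ v : ℕ → α, Monotone v ∧ (∀ k, v k ∈ B) ∧ q ≤ v 0 ∧
      ∀ i j, i ≠ j → v i = v j → IsGreatest B (v i) :=
  exists_antitone_seq_le_of_mem (α := αᵒᵈ) hq

theorem Set.Nontrivial.exists_monotone_int_seq (hB : B.Nontrivial) :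
    ∃ μ : ℤ → α, Monotone μ ∧ μ 0 < μ 1 ∧ (∀ n, μ n ∈ B) ∧
      ∀ m n, m ≠ n → μ m = μ n → IsLeast B (μ n) ∨ IsGreatest B (μ n) := by
  obtain ⟨p, hp, q, hq, hpq⟩ := hB.exists_lt
  obtain ⟨u, hu, huB, hup, hu_rep⟩ := exists_antitone_seq_le_of_mem hp
  obtain ⟨v, hv, hvB, hqv, hv_rep⟩ := exists_monotone_seq_ge_of_mem hq
  have huv : ∀ i j, u i < v j := fun i j =>
    ((hu i.zero_le).trans hup).trans_lt (hpq.trans_le (hqv.trans (hv j.zero_le)))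
  refine ⟨fun n => if n ≤ 0 then u (-n).toNat else v (n - 1).toNat,
    monotone_int_of_le_succ fun n => ?_, ?_, fun n => ?_, fun m n hmn h => ?_⟩
  · split_ifs <;> first | exact hu (by omega) | exact (huv _ _).le | exact hv (by omega) | omega
  · simpa using huv 0 0
  · dsimp only
    split_ifs
    exacts [huB _, hvB _]
  · dsimp only at h ⊢
    split_ifs at h ⊢
    · exact .inl (hu_rep _ _ (by omega) h.symm)
    · exact absurd h (huv _ _).ne'
    · exact absurd h (huv _ _).ne
    · exact .inr (hv_rep _ _ (by omega) h.symm)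

end Chains

theorem ellipsoid_not_LECPlastic_of_bad_eigenvalue_set_general
    {𝕜 H : Type*} [RCLike 𝕜] [NormedAddCommGroup H] [InnerProductSpace 𝕜 H]
    [CompleteSpace H]
    (A : H →L[𝕜] H) (hA : IsSelfAdjoint A)
    (hpos : ∃ c : ℝ, 0 < c ∧ ∀ x : H, ‖x‖ = 1 → c ≤ RCLike.re (inner 𝕜 (A x) x : 𝕜))
    (B : Set ℝ)
    (hBeig : ∀ μ ∈ B, Module.End.HasEigenvalue (A : H →ₗ[𝕜] H) (μ : 𝕜))
    (hBtwo : B.Nontrivial)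
    (hBmin : ∀ m ∈ B, (∀ b ∈ B, m ≤ b) →
      ¬ FiniteDimensional 𝕜 (Module.End.eigenspace (A : H →ₗ[𝕜] H) (m : 𝕜)))
    (hBmax : ∀ m ∈ B, (∀ b ∈ B, b ≤ m) →
      ¬ FiniteDimensional 𝕜 (Module.End.eigenspace (A : H →ₗ[𝕜] H) (m : 𝕜))) :
    ¬ IsLECPlastic 𝕜 {x : H | RCLike.re (inner 𝕜 x (A x) : 𝕜) ≤ 1} := by
  obtain ⟨c, hc, hcA⟩ := hpos
  obtain ⟨μ, hμ, h01, hμB, hμ_rep⟩ := hBtwo.exists_monotone_int_seq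
  obtain ⟨g, hg, hgμ⟩ := hA.exists_orthonormal_eigenvectors μ (fun n => hBeig _ (hμB n))
    fun m n hmn h => by
      rw [h]
      rcases hμ_rep m n hmn h with hmin | hmax
      exacts [hBmin _ hmin.1 fun b hb => hmin.2 hb, hBmax _ hmax.1 fun b hb => hmax.2 hb]
  have hcμ : ∀ n, c ≤ μ n := fun n => (hcA _ (hg.norm_eq_one n)).trans_eq
    (re_inner_apply_self_of_unit_eigenvector (hg.norm_eq_one n) (hgμ n))
  exact not_isLECPlastic_ellipsoid_of_orthonormal_eigenvectors hA hg hgμ hμ hc hcμ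
    (n₀ := 0) (by simpa using h01)

/-- If the set of eigenvalues of a bounded self-adjoint operator `A`
(positively bounded below on the sphere) on a separable infinite-dimensional Hilbert space
contains a subset `B` with at least two elements such that any minimum of `B` has
infinite-dimensional eigenspace and any maximum of `B` has infinite-dimensional eigenspace,
then the ellipsoid `E = {x | ⟨x, Ax⟩ ≤ 1}` is not LEC-plastic. -/
theorem ellipsoid_not_LECPlastic_of_bad_eigenvalue_set
    {𝕜 H : Type*} [RCLike 𝕜] [NormedAddCommGroup H] [InnerProductSpace 𝕜 H]
    [CompleteSpace H] [TopologicalSpace.SeparableSpace H]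
    (hinf : ¬ FiniteDimensional 𝕜 H)
    (A : H →L[𝕜] H) (hA : IsSelfAdjoint A)
    (hpos : ∃ c : ℝ, 0 < c ∧ ∀ x : H, ‖x‖ = 1 → c ≤ RCLike.re (inner 𝕜 (A x) x : 𝕜))
    (B : Set ℝ)
    (hBeig : ∀ μ ∈ B, Module.End.HasEigenvalue (A : H →ₗ[𝕜] H) (μ : 𝕜))
    (hBtwo : B.Nontrivial)
    (hBmin : ∀ m ∈ B, (∀ b ∈ B, m ≤ b) →
      ¬ FiniteDimensional 𝕜 (Module.End.eigenspace (A : H →ₗ[𝕜] H) (m : 𝕜)))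
    (hBmax : ∀ m ∈ B, (∀ b ∈ B, b ≤ m) →
      ¬ FiniteDimensional 𝕜 (Module.End.eigenspace (A : H →ₗ[𝕜] H) (m : 𝕜))) :
    ¬ IsLECPlastic 𝕜 {x : H | RCLike.re (inner 𝕜 x (A x) : 𝕜) ≤ 1} :=
  ellipsoid_not_LECPlastic_of_bad_eigenvalue_set_general A hA hpos B hBeig hBtwo hBmin hBmax
end

section
/- Let H = L²[1,2] and let A : L²[1,2] → L²[1,2] be the multiplication operator (Af)(t) = t·f(t). Then the ellipsoid E = {f ∈ L²[1,2] : ∫₁² t·|f(t)|² dt ≤ 1} generated by A is not LEC-plastic; that is, there exists a linear operator T : L²[1,2] → L²[1,2] whose restriction to E is a non-expansive bijection from E onto E but which is not an isometry on E. -/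
/-!
The ellipsoid is the sublevel set `{weightedNormSq ≤ 1}` of `weightedNormSq f = ∫ t f(t)² dt`.
Let `φ t = (t² + 2) / 3`, an increasing bijection of `[1, 2]` with `φ' t = 2t/3` and `φ t ≤ t`.
The weighted composition operator `(T f)(t) = √(2 φ(t) / 3) · f(φ t)` satisfies
`t · (T f)(t)² = φ'(t) · φ(t) f(φ t)²`, so the substitution `s = φ t` gives
`weightedNormSq (T f) = weightedNormSq f`. Hence `T`, which is bijective (its inverse is
`g ↦ g(φ⁻¹ s) / √(2s/3)`, and `‖f‖² ≤ weightedNormSq f` gives injectivity), maps the ellipsoid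
onto itself. The same substitution gives `‖T f‖² = ∫ (2/3) φ(t) f(φ t)² ≤ ∫ φ'(t) f(φ t)² = ‖f‖²`,
with ratio `26/27` on nonzero constants, so `T` is non-expansive but not an isometry.
-/

open MeasureTheory

open Set

theorem not_isLECPlastic_of_bijective {𝕜 X : Type*} [NontriviallyNormedField 𝕜]
    [NormedAddCommGroup X] [NormedSpace 𝕜 X] (Q : X → ℝ) (c : ℝ) (T : X →ₗ[𝕜] X)
    (hT : Function.Bijective T) (hQ : ∀ x, Q (T x) = Q x) (hle : ∀ x, ‖T x‖ ≤ ‖x‖)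
    (h0 : Q 0 ≤ c) {x₀ : X} (hx₀ : Q x₀ ≤ c) (hlt : ‖T x₀‖ < ‖x₀‖) :
    ¬ IsLECPlastic 𝕜 {x | Q x ≤ c} := by
  intro hplastic
  have hbij : BijOn T {x | Q x ≤ c} {x | Q x ≤ c} := by
    refine ⟨fun x hx => (hQ x).trans_le hx, hT.injective.injOn, fun y hy => ?_⟩
    obtain ⟨x, rfl⟩ := hT.surjective y
    exact ⟨x, (hQ x).symm.trans_le hy, rfl⟩
  have hiso := hplastic T hbij (fun x _ y _ => by simpa only [← map_sub] using hle (x - y))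
    x₀ hx₀ 0 h0
  rw [map_zero, sub_zero, sub_zero] at hiso
  exact hlt.ne hiso

/-- Reweighting `μ.restrict s` by the positive density `|det f'|` keeps its null sets, and by the
change of variables formula the reweighted measure is pushed forward by `f` to
`μ.restrict (f '' s)`. -/
theorem MeasureTheory.quasiMeasurePreserving_restrict_of_hasFDerivWithinAt
    {E : Type*} [NormedAddCommGroup E] [NormedSpace ℝ E] [FiniteDimensional ℝ E]
    [MeasurableSpace E] [BorelSpace E] (μ : Measure E) [μ.IsAddHaarMeasure]
    {s : Set E} {f : E → E} {f' : E → E →L[ℝ] E} (hs : MeasurableSet s) (hf : Measurable f)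
    (hf' : ∀ x ∈ s, HasFDerivWithinAt f (f' x) s x) (hdet : ∀ x ∈ s, (f' x).det ≠ 0)
    (hinj : InjOn f s) (hmaps : MapsTo f s s) :
    Measure.QuasiMeasurePreserving f (μ.restrict s) (μ.restrict s) := by
  refine ⟨hf, ?_⟩
  have hac : μ.restrict s ≪ (μ.restrict s).withDensity fun x => ENNReal.ofReal |(f' x).det| :=
    withDensity_absolutelyContinuous' (aemeasurable_ofReal_abs_det_fderivWithin μ hs hf') <| by
      filter_upwards [ae_restrict_mem hs] with x hx
      simpa using hdet x hx
  refine (hac.map hf).trans ?_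
  rw [map_withDensity_abs_det_fderiv_eq_addHaar μ hs.nullMeasurableSet hf' hinj]
  exact (Measure.restrict_mono hmaps.image_subset le_rfl).absolutelyContinuous

theorem MeasureTheory.L2.norm_sq_eq_integral_sq {α : Type*} [MeasurableSpace α] {μ : Measure α}
    (f : Lp ℝ 2 μ) : ‖f‖ ^ 2 = ∫ a, f a ^ 2 ∂μ := by
  rw [← real_inner_self_eq_norm_sq, L2.inner_def]
  simp [sq]

noncomputable section

namespace EllipsoidL2

abbrev μ : Measure ℝ := volume.restrict (Icc (1 : ℝ) 2)

instance : IsFiniteMeasure μ := isFiniteMeasure_restrict.2 (by simp)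

def phi (t : ℝ) : ℝ := (t ^ 2 + 2) / 3

def phiInv (s : ℝ) : ℝ := √(3 * s - 2)

def weight (s : ℝ) : ℝ := √(2 * s / 3)

lemma hasDerivAt_phi (t : ℝ) : HasDerivAt phi (2 * t / 3) t := by
  have h := ((hasDerivAt_pow 2 t).add_const 2).div_const 3
  norm_num at h
  exact h

lemma phi_pos (t : ℝ) : 0 < phi t := by unfold phi; positivity

lemma phi_le_self {t : ℝ} (ht : t ∈ Icc (1 : ℝ) 2) : phi t ≤ t := by
  unfold phi; nlinarith [ht.1, ht.2]

lemma one_le_phi {t : ℝ} (ht : t ∈ Icc (1 : ℝ) 2) : 1 ≤ phi t := by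
  unfold phi; nlinarith [ht.1]

lemma phiInv_phi {t : ℝ} (ht : 0 ≤ t) : phiInv (phi t) = t := by
  rw [phiInv, phi, show 3 * ((t ^ 2 + 2) / 3) - 2 = t ^ 2 by ring, Real.sqrt_sq ht]

lemma phi_phiInv {s : ℝ} (hs : 2 / 3 ≤ s) : phi (phiInv s) = s := by
  rw [phi, phiInv, Real.sq_sqrt (by linarith)]; ring

lemma phi_mapsTo : MapsTo phi (Icc 1 2) (Icc 1 2) :=
  fun _ ht => ⟨one_le_phi ht, (phi_le_self ht).trans ht.2⟩

lemma phi_image : phi '' Icc 1 2 = Icc (1 : ℝ) 2 := by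
  refine phi_mapsTo.image_subset.antisymm
    fun s hs => ⟨phiInv s, ⟨?_, ?_⟩, phi_phiInv (by linarith [hs.1])⟩
  · rw [phiInv, Real.le_sqrt (by norm_num) (by linarith [hs.1])]; linarith [hs.1]
  · rw [phiInv, Real.sqrt_le_left (by norm_num)]; linarith [hs.2]

lemma phi_injOn : InjOn phi (Icc 1 2) := fun a ha b hb h => by
  rw [← phiInv_phi (by linarith [ha.1] : (0:ℝ) ≤ a), h, phiInv_phi (by linarith [hb.1])]

lemma integral_comp_phi (g : ℝ → ℝ) : ∫ t, 2 * t / 3 * g (phi t) ∂μ = ∫ s, g s ∂μ := by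
  have h := integral_image_eq_integral_abs_deriv_smul measurableSet_Icc
    (fun t _ => (hasDerivAt_phi t).hasDerivWithinAt) phi_injOn g
  rw [phi_image] at h
  rw [h]
  refine setIntegral_congr_fun measurableSet_Icc fun t ht => ?_
  rw [smul_eq_mul, abs_of_nonneg (by linarith [ht.1])]

lemma integrable_comp_phi_iff (g : ℝ → ℝ) :
    Integrable (fun t => 2 * t / 3 * g (phi t)) μ ↔ Integrable g μ := by
  have h := integrableOn_image_iff_integrableOn_abs_deriv_smul measurableSet_Icc
    (fun t _ => (hasDerivAt_phi t).hasDerivWithinAt) phi_injOn g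
  rw [phi_image] at h
  rw [← IntegrableOn, ← IntegrableOn, h]
  refine integrableOn_congr_fun (fun t ht => ?_) measurableSet_Icc
  rw [smul_eq_mul, abs_of_nonneg (by linarith [ht.1])]

lemma quasiMeasurePreserving_phi : Measure.QuasiMeasurePreserving phi μ μ :=
  quasiMeasurePreserving_restrict_of_hasFDerivWithinAt volume measurableSet_Icc
    (by unfold phi; fun_prop)
    (fun t _ => (hasDerivAt_phi t).hasFDerivAt.hasFDerivWithinAt)
    (fun t ht => by rw [ContinuousLinearMap.det_toSpanSingleton]; linarith [ht.1])
    phi_injOn phi_mapsTo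

def weightedComp (f : ℝ → ℝ) (t : ℝ) : ℝ := weight (phi t) * f (phi t)

lemma weight_pos {s : ℝ} (hs : 0 < s) : 0 < weight s :=
  Real.sqrt_pos.2 (by positivity)

lemma weightedComp_sq (f : ℝ → ℝ) (t : ℝ) :
    weightedComp f t ^ 2 = 2 * phi t / 3 * f (phi t) ^ 2 := by
  have := phi_pos t
  rw [weightedComp, mul_pow, weight, Real.sq_sqrt (by positivity)]

lemma weightedComp_add (f g : ℝ → ℝ) :
    weightedComp (f + g) = weightedComp f + weightedComp g :=
  funext fun _ => mul_add _ _ _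

lemma weightedComp_smul (c : ℝ) (f : ℝ → ℝ) : weightedComp (c • f) = c • weightedComp f :=
  funext fun _ => mul_left_comm _ _ _

lemma weightedComp_congr {f g : ℝ → ℝ} (h : f =ᵐ[μ] g) : weightedComp f =ᵐ[μ] weightedComp g :=
  (quasiMeasurePreserving_phi.ae_eq_comp h).mono fun t ht => congrArg (weight (phi t) * ·) ht

lemma memLp_weightedComp {f : ℝ → ℝ} (hf : MemLp f 2 μ) : MemLp (weightedComp f) 2 μ := by
  have hmeas : AEStronglyMeasurable (weightedComp f) μ :=
    (by unfold weight phi; fun_prop : Continuous (weight ∘ phi)).aestronglyMeasurable.mul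
      (hf.1.comp_quasiMeasurePreserving quasiMeasurePreserving_phi)
  refine (memLp_two_iff_integrable_sq hmeas).2 <|
    ((integrable_comp_phi_iff _).2 hf.integrable_sq).mono' (hmeas.pow 2) ?_
  filter_upwards [ae_restrict_mem measurableSet_Icc] with t ht
  rw [Real.norm_of_nonneg (sq_nonneg _), weightedComp_sq]
  gcongr
  exact phi_le_self ht

def weightedCompLp : Lp ℝ 2 μ →ₗ[ℝ] Lp ℝ 2 μ where
  toFun f := MemLp.toLp _ (memLp_weightedComp (Lp.memLp f))
  map_add' f g := by
    rw [← MemLp.toLp_add]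
    refine MemLp.toLp_congr _ _ ?_
    rw [← weightedComp_add]
    exact weightedComp_congr (Lp.coeFn_add f g)
  map_smul' c f := by
    rw [RingHom.id_apply, ← MemLp.toLp_const_smul]
    refine MemLp.toLp_congr _ _ ?_
    rw [← weightedComp_smul]
    exact weightedComp_congr (Lp.coeFn_smul c f)

lemma coeFn_weightedCompLp (f : Lp ℝ 2 μ) : weightedCompLp f =ᵐ[μ] weightedComp f :=
  MemLp.coeFn_toLp (memLp_weightedComp (Lp.memLp f))

def weightedNormSq (f : Lp ℝ 2 μ) : ℝ := ∫ t, t * f t ^ 2 ∂μ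

lemma weightedNormSq_zero : weightedNormSq 0 = 0 := by
  rw [weightedNormSq, ← integral_zero ℝ ℝ]
  refine integral_congr_ae ((Lp.coeFn_zero ℝ 2 μ).mono fun t ht => ?_)
  simp only [ht, Pi.zero_apply]
  ring

lemma weightedNormSq_weightedCompLp (f : Lp ℝ 2 μ) :
    weightedNormSq (weightedCompLp f) = weightedNormSq f :=
  calc ∫ t, t * weightedCompLp f t ^ 2 ∂μ = ∫ t, 2 * t / 3 * (phi t * f (phi t) ^ 2) ∂μ := by
        refine integral_congr_ae ((coeFn_weightedCompLp f).mono fun t ht => ?_)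
        simp only [ht, weightedComp_sq]
        ring
    _ = weightedNormSq f := integral_comp_phi fun s => s * f s ^ 2

lemma norm_sq_le_weightedNormSq (f : Lp ℝ 2 μ) : ‖f‖ ^ 2 ≤ weightedNormSq f := by
  have hf := (Lp.memLp f).integrable_sq
  rw [L2.norm_sq_eq_integral_sq]
  refine integral_mono_ae hf ((hf.const_mul 2).mono' (continuous_id.aestronglyMeasurable.mul
    ((Lp.memLp f).1.pow 2)) ?_) ?_ <;>
  filter_upwards [ae_restrict_mem measurableSet_Icc] with t ht
  · rw [Real.norm_of_nonneg (by nlinarith [ht.1, sq_nonneg (f t)])]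
    nlinarith [ht.2, sq_nonneg (f t)]
  · nlinarith [ht.1, sq_nonneg (f t)]

lemma weightedCompLp_injective : Function.Injective weightedCompLp := by
  refine (injective_iff_map_eq_zero _).2 fun f hf => ?_
  have h := norm_sq_le_weightedNormSq f
  rw [← weightedNormSq_weightedCompLp, hf, weightedNormSq_zero] at h
  exact norm_eq_zero.1 (pow_eq_zero_iff two_ne_zero |>.1 (le_antisymm h (sq_nonneg _)))

lemma norm_weightedCompLp_le (f : Lp ℝ 2 μ) : ‖weightedCompLp f‖ ≤ ‖f‖ := by
  refine (pow_le_pow_iff_left₀ (norm_nonneg _) (norm_nonneg _) two_ne_zero).1 ?_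
  rw [L2.norm_sq_eq_integral_sq, L2.norm_sq_eq_integral_sq,
    ← integral_comp_phi fun s => f s ^ 2]
  have hf := (integrable_comp_phi_iff _).2 (Lp.memLp f).integrable_sq
  refine integral_mono_ae (Lp.memLp _).integrable_sq hf ?_
  filter_upwards [coeFn_weightedCompLp f, ae_restrict_mem measurableSet_Icc] with t hTf ht
  rw [hTf, weightedComp_sq]
  gcongr
  exact phi_le_self ht

def weightedCompInv (g : ℝ → ℝ) (s : ℝ) : ℝ := g (phiInv s) / weight s

lemma weightedComp_weightedCompInv (g : ℝ → ℝ) {t : ℝ} (ht : 0 ≤ t) :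
    weightedComp (weightedCompInv g) t = g t := by
  rw [weightedComp, weightedCompInv, phiInv_phi ht, mul_div_cancel₀ _ (weight_pos (phi_pos t)).ne']

lemma memLp_weightedCompInv (g : Lp ℝ 2 μ) : MemLp (weightedCompInv g) 2 μ := by
  have hmeas : Measurable (weightedCompInv g) :=
    ((Lp.stronglyMeasurable g).measurable.comp (by unfold phiInv; fun_prop)).div
      (by unfold weight; fun_prop)
  refine (memLp_two_iff_integrable_sq hmeas.aestronglyMeasurable).2 <|
    (integrable_comp_phi_iff _).1 <| ((Lp.memLp g).integrable_sq.const_mul 2).mono'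
      (by unfold phi; fun_prop (disch := exact hmeas)) ?_
  filter_upwards [ae_restrict_mem measurableSet_Icc] with t ht
  have hφ := one_le_phi ht
  have h : 2 * t / 3 * weightedCompInv g (phi t) ^ 2 = t / phi t * g t ^ 2 := by
    rw [weightedCompInv, div_pow, weight, Real.sq_sqrt (by linarith),
      phiInv_phi (by linarith [ht.1])]
    field_simp
  rw [h, Real.norm_of_nonneg (by have := ht.1; positivity)]
  gcongr
  rw [div_le_iff₀ (by linarith)]
  nlinarith [ht.2]

lemma weightedCompLp_surjective : Function.Surjective weightedCompLp := fun g => by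
  refine ⟨(memLp_weightedCompInv g).toLp _, Lp.ext ?_⟩
  filter_upwards [coeFn_weightedCompLp _, weightedComp_congr (memLp_weightedCompInv g).coeFn_toLp,
    ae_restrict_mem measurableSet_Icc] with t hT hinv ht
  rw [hT, hinv, weightedComp_weightedCompInv _ (by linarith [ht.1])]

lemma integral_eq_intervalIntegral (g : ℝ → ℝ) : ∫ t, g t ∂μ = ∫ t in (1 : ℝ)..2, g t := by
  rw [intervalIntegral.integral_of_le one_le_two, integral_Icc_eq_integral_Ioc]

lemma weightedNormSq_const (c : ℝ) : weightedNormSq (Lp.const 2 μ c) = 3 / 2 * c ^ 2 := by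
  have h : (fun t => t * Lp.const 2 μ c t ^ 2) =ᵐ[μ] fun t => t * c ^ 2 :=
    (Lp.coeFn_const 2 μ c).mono fun t ht => by simp only [ht, Function.const_apply]
  rw [weightedNormSq, integral_congr_ae h, integral_eq_intervalIntegral]
  norm_num

lemma norm_const_sq (c : ℝ) : ‖Lp.const 2 μ c‖ ^ 2 = c ^ 2 := by
  have h : (fun t => Lp.const 2 μ c t ^ 2) =ᵐ[μ] fun _ => c ^ 2 :=
    (Lp.coeFn_const 2 μ c).mono fun t ht => by simp only [ht, Function.const_apply]
  rw [L2.norm_sq_eq_integral_sq, integral_congr_ae h, integral_eq_intervalIntegral]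
  norm_num

lemma norm_weightedCompLp_const_sq (c : ℝ) :
    ‖weightedCompLp (Lp.const 2 μ c)‖ ^ 2 = 26 / 27 * c ^ 2 := by
  have h : (fun t => weightedCompLp (Lp.const 2 μ c) t ^ 2) =ᵐ[μ] fun t => 2 * phi t / 3 * c ^ 2 :=
    ((coeFn_weightedCompLp _).trans (weightedComp_congr (Lp.coeFn_const 2 μ c))).mono
      fun t ht => by simp only [ht, weightedComp_sq, Function.const_apply]
  rw [L2.norm_sq_eq_integral_sq, integral_congr_ae h, integral_eq_intervalIntegral]
  norm_num [phi]

lemma norm_weightedCompLp_const_lt {c : ℝ} (hc : c ≠ 0) :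
    ‖weightedCompLp (Lp.const 2 μ c)‖ < ‖Lp.const 2 μ c‖ := by
  refine (pow_lt_pow_iff_left₀ (norm_nonneg _) (norm_nonneg _) two_ne_zero).1 ?_
  rw [norm_weightedCompLp_const_sq, norm_const_sq]
  have : 0 < c ^ 2 := by positivity
  linarith

end EllipsoidL2

end

/-- The ellipsoid `E = {f ∈ L²[1,2] : ∫₁² t |f t|² dt ≤ 1}` generated by
the multiplication operator `(Af)(t) = t f(t)` on `L²[1,2]` is not LEC-plastic. -/
theorem ellipsoid_L2_unit_interval_not_LECPlastic :
    ¬ IsLECPlastic ℝ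
      {f : Lp ℝ 2 (volume.restrict (Set.Icc (1 : ℝ) 2)) |
        ∫ t : ℝ, t * (f t) ^ 2 ∂(volume.restrict (Set.Icc (1 : ℝ) 2)) ≤ 1} := by
  open EllipsoidL2 in
  exact not_isLECPlastic_of_bijective weightedNormSq 1 weightedCompLp
    ⟨weightedCompLp_injective, weightedCompLp_surjective⟩ weightedNormSq_weightedCompLp
    norm_weightedCompLp_le (weightedNormSq_zero.trans_le zero_le_one)
    (x₀ := Lp.const 2 μ (1 / 2)) (by rw [weightedNormSq_const]; norm_num)
    (norm_weightedCompLp_const_lt (by norm_num))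
end

section
/- Let 0 < α < β, and let μ : ℝ → [0,∞) be a function in L¹(ℝ) with support contained in (α, β) and with μ(t) > 0 for almost every t ∈ (α, β). Let A : L²(ℝ, μ(t)dt) → L²(ℝ, μ(t)dt) be the multiplication operator (Af)(t) = t·f(t). Then the ellipsoid E = {f ∈ L²(ℝ, μ(t)dt) : ∫ t·|f(t)|² μ(t)dt ≤ 1} generated by A is not LEC-plastic; that is, there exists a linear operator T on L²(ℝ, μ(t)dt) whose restriction to E is a non-expansive bijection from E onto E but which is not an isometry on E. -/
/-!
Write `ν = μ(t) dt` and `Q f = ∫ t f(t)² dν`, so that the ellipsoid is `{Q ≤ 1}`. The map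
`ψ t = α + (t - α)² / (β - α)` is a diffeomorphism of `(α, β)` onto itself moving every point
down. With `J = |ψ'| · μ ∘ ψ / μ` the Jacobian of `ψ` relative to `ν`, the weighted composition
operator `T f = w · (f ∘ ψ)`, `w² = ψ · J / t`, preserves `Q` by the change of variables
`t ↦ ψ t`; the same construction for `ψ⁻¹` inverts it, so `T` maps the ellipsoid bijectively
onto itself. The same change of variables gives `‖T f‖² = ∫ s / ψ⁻¹(s) · f(s)² dν`, and
`s < ψ⁻¹(s)` on `(α, β)`, so `T` strictly shrinks every nonzero vector and is not an isometry on
the ellipsoid.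
-/

open MeasureTheory

open Set Filter ENNReal

theorem not_isLECPlastic_of_norm_lt {𝕜 X : Type*} [NontriviallyNormedField 𝕜]
    [NormedAddCommGroup X] [NormedSpace 𝕜 X] {M : Set X} (T : X ≃ₗ[𝕜] X)
    (hT : MapsTo T M M) (hT_symm : MapsTo T.symm M M) (hlt : ∀ x ≠ 0, ‖T x‖ < ‖x‖)
    (h0 : 0 ∈ M) {x : X} (hxM : x ∈ M) (hx : x ≠ 0) : ¬ IsLECPlastic 𝕜 M := by
  intro hM
  have hle : ∀ x, ‖T x‖ ≤ ‖x‖ := fun x ↦ by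
    rcases eq_or_ne x 0 with rfl | hx
    · simp
    · exact (hlt x hx).le
  have hbij : BijOn T M M := T.toEquiv.bijOn' hT hT_symm
  have := hM T hbij (fun x _ y _ ↦ by simpa [← map_sub] using hle (x - y)) x hxM 0 h0
  simp only [map_zero, sub_zero] at this
  exact (hlt x hx).ne this

namespace MeasureTheory

section L2

variable {Ω E : Type*} [MeasurableSpace Ω] [NormedAddCommGroup E] {ν : Measure Ω}

theorem sq_eLpNorm_two (f : Ω → E) : eLpNorm f 2 ν ^ 2 = ∫⁻ x, ‖f x‖ₑ ^ 2 ∂ν := by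
  rw [eLpNorm_eq_lintegral_rpow_enorm_toReal two_ne_zero ofNat_ne_top, ← ENNReal.rpow_natCast,
    ← ENNReal.rpow_mul]
  norm_num

theorem memLp_two_iff_lintegral_lt_top {f : Ω → E} (hf : AEStronglyMeasurable f ν) :
    MemLp f 2 ν ↔ ∫⁻ x, ‖f x‖ₑ ^ 2 ∂ν < ∞ := by
  simp [MemLp, hf, ← sq_eLpNorm_two, ENNReal.pow_lt_top_iff]

theorem Lp.sq_enorm_eq_lintegral (f : Lp E 2 ν) : ‖f‖ₑ ^ 2 = ∫⁻ x, ‖f x‖ₑ ^ 2 ∂ν := by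
  rw [Lp.enorm_def, sq_eLpNorm_two]

theorem Lp.norm_lt_of_lintegral_lt {f g : Lp E 2 ν}
    (h : ∫⁻ x, ‖f x‖ₑ ^ 2 ∂ν < ∫⁻ x, ‖g x‖ₑ ^ 2 ∂ν) : ‖f‖ < ‖g‖ := by
  rw [← Lp.sq_enorm_eq_lintegral, ← Lp.sq_enorm_eq_lintegral] at h
  rw [← toReal_enorm, ← toReal_enorm]
  exact ENNReal.toReal_strict_mono enorm_ne_top ((ENNReal.pow_lt_pow_left_iff two_ne_zero).1 h)

theorem Lp.lintegral_ofReal_mul_enorm_sq_lt {r : Ω → ℝ} (hr : ∀ᵐ x ∂ν, r x < 1) {f : Lp E 2 ν}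
    (hf : f ≠ 0) : ∫⁻ x, ENNReal.ofReal (r x) * ‖f x‖ₑ ^ 2 ∂ν < ∫⁻ x, ‖f x‖ₑ ^ 2 ∂ν := by
  have hr' : ∀ᵐ x ∂ν, ENNReal.ofReal (r x) < 1 := hr.mono fun x hx ↦ ofReal_lt_one.2 hx
  have hle : (fun x ↦ ENNReal.ofReal (r x) * ‖f x‖ₑ ^ 2) ≤ᵐ[ν] fun x ↦ ‖f x‖ₑ ^ 2 :=
    hr'.mono fun x hx ↦ mul_le_of_le_one_left' hx.le
  refine lintegral_strict_mono_of_ae_le_of_frequently_ae_lt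
    ((Lp.aestronglyMeasurable f).enorm.pow_const 2) ?_ hle ?_
  · refine ne_top_of_le_ne_top ?_ (lintegral_mono_ae hle)
    rw [← Lp.sq_enorm_eq_lintegral]
    exact pow_ne_top enorm_ne_top
  · have hf' : ∃ᵐ x ∂ν, f x ≠ 0 := fun h ↦
      hf (Lp.eq_zero_iff_ae_eq_zero.2 (h.mono fun _ hx ↦ not_not.1 hx))
    refine (hf'.and_eventually hr').mono fun x ⟨hx, hrx⟩ ↦ (?_ : _ < _).ne
    simpa using (ENNReal.mul_lt_mul_iff_left (pow_ne_zero 2 (enorm_ne_zero.2 hx))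
      (pow_ne_top enorm_ne_top)).2 hrx

end L2

theorem AEMeasurable.exists_measurable_support_subset_ae_eq {Ω M : Type*}
    [MeasurableSpace Ω] [MeasurableSpace M] [Zero M] {ν : Measure Ω} {f : Ω → M}
    (hf : AEMeasurable f ν) {s : Set Ω} (hs : MeasurableSet s) (hsupp : f.support ⊆ s) :
    ∃ g : Ω → M, Measurable g ∧ g.support ⊆ s ∧ f =ᵐ[ν] g := by
  refine ⟨s.indicator hf.mk, hf.measurable_mk.indicator hs, support_indicator_subset, ?_⟩
  filter_upwards [hf.ae_eq_mk] with x hx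
  by_cases hxs : x ∈ s
  · rw [indicator_of_mem hxs, hx]
  · rw [indicator_of_notMem hxs, Function.notMem_support.1 fun h ↦ hxs (hsupp h)]

namespace Lp

variable {Ω : Type*} [MeasurableSpace Ω] {ν : Measure Ω} {p : ℝ≥0∞}

noncomputable def weightedComp (w : Ω → ℝ) (θ : Ω → Ω)
    (hθ : Measure.QuasiMeasurePreserving θ ν ν)
    (hw : ∀ f : Lp ℝ p ν, MemLp (fun x ↦ w x * f (θ x)) p ν) : Lp ℝ p ν →ₗ[ℝ] Lp ℝ p ν where
  toFun f := (hw f).toLp _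
  map_add' f g := by
    rw [← MemLp.toLp_add]
    refine MemLp.toLp_congr _ _ ?_
    filter_upwards [hθ.ae_eq_comp (coeFn_add f g)] with x hx
    simp only [Function.comp_apply, Pi.add_apply] at hx
    simp only [Pi.add_apply, hx, mul_add]
  map_smul' c f := by
    rw [RingHom.id_apply, ← MemLp.toLp_const_smul]
    refine MemLp.toLp_congr _ _ ?_
    filter_upwards [hθ.ae_eq_comp (coeFn_smul c f)] with x hx
    simp only [Function.comp_apply, Pi.smul_apply, smul_eq_mul] at hx
    simp only [Pi.smul_apply, smul_eq_mul, hx, mul_left_comm]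

variable {w w' : Ω → ℝ} {θ θ' : Ω → Ω} {hθ : Measure.QuasiMeasurePreserving θ ν ν}
  {hθ' : Measure.QuasiMeasurePreserving θ' ν ν}
  {hw : ∀ f : Lp ℝ p ν, MemLp (fun x ↦ w x * f (θ x)) p ν}
  {hw' : ∀ f : Lp ℝ p ν, MemLp (fun x ↦ w' x * f (θ' x)) p ν}

theorem coeFn_weightedComp (f : Lp ℝ p ν) :
    weightedComp w θ hθ hw f =ᵐ[ν] fun x ↦ w x * f (θ x) :=
  (hw f).coeFn_toLp

theorem weightedComp_weightedComp_of_ae (h : ∀ᵐ x ∂ν, w' x * w (θ' x) = 1 ∧ θ (θ' x) = x)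
    (f : Lp ℝ p ν) : weightedComp w' θ' hθ' hw' (weightedComp w θ hθ hw f) = f := by
  ext1
  filter_upwards [coeFn_weightedComp (hw := hw') (weightedComp w θ hθ hw f),
    hθ'.ae_eq_comp (coeFn_weightedComp (hw := hw) f), h] with x h₁ h₂ ⟨hw, hθ⟩
  simp only [Function.comp_apply] at h₂
  rw [h₁, h₂, ← mul_assoc, hw, hθ, one_mul]

end Lp

end MeasureTheory

def ellipsoid (ν : Measure ℝ) : Set (Lp ℝ 2 ν) := {f | ∫ t, t * f t ^ 2 ∂ν ≤ 1}

section Ellipsoid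

variable {ν : Measure ℝ}

theorem integral_mul_sq_eq_toReal_lintegral (h : ∀ᵐ t ∂ν, 0 ≤ t) {f : ℝ → ℝ}
    (hf : AEStronglyMeasurable f ν) :
    ∫ t, t * f t ^ 2 ∂ν = (∫⁻ t, ENNReal.ofReal t * ‖f t‖ₑ ^ 2 ∂ν).toReal := by
  rw [integral_eq_lintegral_of_nonneg_ae (f := fun t ↦ t * f t ^ 2)
    (h.mono fun t ht ↦ by positivity) (aestronglyMeasurable_id.mul (hf.pow 2))]
  refine congrArg _ (lintegral_congr_ae (h.mono fun t ht ↦ ?_))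
  beta_reduce
  rw [ofReal_mul ht, ← sq_abs, ofReal_pow (abs_nonneg _), ← Real.enorm_eq_ofReal_abs]

theorem zero_mem_ellipsoid : (0 : Lp ℝ 2 ν) ∈ ellipsoid ν := by
  have : ∫ t, t * (0 : Lp ℝ 2 ν) t ^ 2 ∂ν = 0 := by
    refine (integral_congr_ae ((Lp.coeFn_zero ℝ 2 ν).mono fun t ht ↦ ?_)).trans
      (integral_zero ℝ ℝ)
    rw [ht, Pi.zero_apply]
    ring
  exact this.le.trans zero_le_one

theorem exists_ne_zero_mem_ellipsoid [IsFiniteMeasure ν] [NeZero ν] :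
    ∃ f ∈ ellipsoid ν, f ≠ 0 := by
  set f := Lp.const 2 ν (1 : ℝ)
  have hf : f ≠ 0 := by
    rw [← norm_pos_iff, Lp.norm_const 2 ν _ two_ne_zero]
    exact mul_pos (by norm_num) (Real.rpow_pos_of_pos measureReal_univ_pos _)
  set Q := ∫ t, t * f t ^ 2 ∂ν
  set c := 1 / (|Q| + 1)
  have hc : 0 < c := by positivity
  refine ⟨c • f, ?_, smul_ne_zero hc.ne' hf⟩
  have : ∫ t, t * (c • f) t ^ 2 ∂ν = c ^ 2 * Q := by
    rw [← integral_const_mul]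
    refine integral_congr_ae ((Lp.coeFn_smul c f).mono fun t ht ↦ ?_)
    simp only [ht, Pi.smul_apply, smul_eq_mul]
    ring
  change ∫ t, t * (c • f) t ^ 2 ∂ν ≤ 1
  rw [this, div_pow, one_pow, div_mul_eq_mul_div, one_mul, div_le_one (by positivity)]
  nlinarith [le_abs_self Q, abs_nonneg Q]

end Ellipsoid

structure SelfDiffeoOn (s : Set ℝ) where
  toFun : ℝ → ℝ
  invFun : ℝ → ℝ
  mapsTo : MapsTo toFun s s
  mapsTo_invFun : MapsTo invFun s s
  left_inv : LeftInvOn invFun toFun s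
  right_inv : RightInvOn invFun toFun s
  differentiableOn : DifferentiableOn ℝ toFun s
  differentiableOn_invFun : DifferentiableOn ℝ invFun s
  measurable : Measurable toFun
  measurable_invFun : Measurable invFun

namespace SelfDiffeoOn

variable {s : Set ℝ}

instance : CoeFun (SelfDiffeoOn s) fun _ ↦ ℝ → ℝ := ⟨toFun⟩

def symm (e : SelfDiffeoOn s) : SelfDiffeoOn s where
  toFun := e.invFun
  invFun := e.toFun
  mapsTo := e.mapsTo_invFun
  mapsTo_invFun := e.mapsTo
  left_inv := e.right_inv
  right_inv := e.left_inv
  differentiableOn := e.differentiableOn_invFun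
  differentiableOn_invFun := e.differentiableOn
  measurable := e.measurable_invFun
  measurable_invFun := e.measurable

variable (e : SelfDiffeoOn s)

theorem symm_apply_apply {t : ℝ} (ht : t ∈ s) : e.symm (e t) = t := e.left_inv ht

theorem apply_symm_apply {t : ℝ} (ht : t ∈ s) : e (e.symm t) = t := e.right_inv ht

theorem bijOn : BijOn e s s := InvOn.bijOn ⟨e.left_inv, e.right_inv⟩ e.mapsTo e.mapsTo_invFun

theorem hasDerivWithinAt (hs : IsOpen s) {t : ℝ} (ht : t ∈ s) :
    HasDerivWithinAt e (deriv e t) s t :=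
  ((e.differentiableOn t ht).differentiableAt (hs.mem_nhds ht)).hasDerivAt.hasDerivWithinAt

theorem deriv_apply_symm_mul_deriv_symm (hs : IsOpen s) {t : ℝ} (ht : t ∈ s) :
    deriv e (e.symm t) * deriv e.symm t = 1 := by
  have hinv : e ∘ e.symm =ᶠ[nhds t] id :=
    eventually_of_mem (hs.mem_nhds ht) fun y hy ↦ e.apply_symm_apply hy
  have hcomp := deriv_comp (h := e.symm) (h₂ := e) t
    ((e.differentiableOn _ (e.mapsTo_invFun ht)).differentiableAt
      (hs.mem_nhds (e.mapsTo_invFun ht)))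
    ((e.symm.differentiableOn t ht).differentiableAt (hs.mem_nhds ht))
  rw [hinv.deriv_eq, deriv_id] at hcomp
  exact hcomp.symm

end SelfDiffeoOn

noncomputable abbrev densityMeasure (μ : ℝ → ℝ) : Measure ℝ :=
  volume.withDensity fun t ↦ ENNReal.ofReal (μ t)

-- The junk value where `μ t = 0` is harmless: that set is `densityMeasure μ`-null.
noncomputable def densityJacobian (μ θ : ℝ → ℝ) (t : ℝ) : ℝ := |deriv θ t| * μ (θ t) / μ t

section DensityMeasure

variable {s : Set ℝ} {μ : ℝ → ℝ}

theorem ae_densityMeasure_pos (hμ : Measurable μ) : ∀ᵐ t ∂densityMeasure μ, 0 < μ t := by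
  rw [ae_withDensity_iff hμ.ennreal_ofReal]
  exact ae_of_all _ fun t ht ↦ ENNReal.ofReal_pos.1 (pos_iff_ne_zero.2 ht)

theorem ae_densityMeasure_mem (hμ : Measurable μ) (hsupp : μ.support ⊆ s) :
    ∀ᵐ t ∂densityMeasure μ, t ∈ s :=
  (ae_densityMeasure_pos hμ).mono fun _ ht ↦ hsupp ht.ne'

theorem lintegral_densityMeasure (hμ : Measurable μ) (hsupp : μ.support ⊆ s) (G : ℝ → ℝ≥0∞) :
    ∫⁻ t, G t ∂densityMeasure μ = ∫⁻ t in s, ENNReal.ofReal (μ t) * G t := by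
  rw [lintegral_withDensity_eq_lintegral_mul_non_measurable _ hμ.ennreal_ofReal
    (ae_of_all _ fun _ ↦ ofReal_lt_top), setLIntegral_eq_of_support_subset]
  · rfl
  · exact fun t ht ↦ hsupp fun h ↦ ht (by simp [h])

variable (hs : IsOpen s) (hμ : Measurable μ) (hsupp : μ.support ⊆ s)
  (hpos : ∀ᵐ t ∂volume.restrict s, 0 < μ t)
include hs hμ hsupp hpos

theorem lintegral_densityMeasure_eq_lintegral_comp (e : SelfDiffeoOn s) (G : ℝ → ℝ≥0∞) :
    ∫⁻ y, G y ∂densityMeasure μ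
      = ∫⁻ t, ENNReal.ofReal (densityJacobian μ e t) * G (e t) ∂densityMeasure μ := by
  rw [lintegral_densityMeasure hμ hsupp, lintegral_densityMeasure hμ hsupp]
  conv_lhs => rw [← e.bijOn.image_eq,
    lintegral_image_eq_lintegral_abs_deriv_mul hs.measurableSet (fun t ↦ e.hasDerivWithinAt hs)
      e.bijOn.injOn]
  refine lintegral_congr_ae ?_
  filter_upwards [hpos] with t ht
  rw [← mul_assoc, ← mul_assoc, ← ofReal_mul (abs_nonneg _), mul_comm (ENNReal.ofReal (μ t)),
    ← ofReal_mul' ht.le, densityJacobian, div_mul_cancel₀ _ ht.ne']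

theorem SelfDiffeoOn.quasiMeasurePreserving (e : SelfDiffeoOn s) :
    Measure.QuasiMeasurePreserving e (densityMeasure μ) (densityMeasure μ) := by
  refine ⟨e.measurable, Measure.AbsolutelyContinuous.mk fun N hN hνN ↦ ?_⟩
  -- change variables along `e.symm`: `ν (e ⁻¹' N) = ∫ J · 1_N (e (e.symm y)) dν(y) = 0`
  rw [Measure.map_apply e.measurable hN, ← lintegral_indicator_one (e.measurable hN),
    lintegral_densityMeasure_eq_lintegral_comp hs hμ hsupp hpos e.symm]
  refine (lintegral_congr_ae ?_).trans lintegral_zero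
  filter_upwards [measure_eq_zero_iff_ae_notMem.1 hνN, ae_densityMeasure_mem hμ hsupp]
    with y hyN hys
  simp [e.apply_symm_apply hys, hyN]

end DensityMeasure

theorem densityMeasure_ne_zero {s : Set ℝ} {μ : ℝ → ℝ} (hμ : Measurable μ)
    (hpos : ∀ᵐ t ∂volume.restrict s, 0 < μ t) (hs : volume s ≠ 0) : densityMeasure μ ≠ 0 := by
  intro h
  have h0 : ∀ᵐ t, ENNReal.ofReal (μ t) ≠ 0 → False :=
    (ae_withDensity_iff hμ.ennreal_ofReal).1 (by
      change ∀ᵐ _ ∂densityMeasure μ, False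
      simp [h])
  have : ∀ᵐ t ∂volume.restrict s, False := by
    filter_upwards [hpos, ae_restrict_of_ae h0] with t ht h
    exact h (ofReal_pos.2 ht).ne'
  exact hs (Measure.restrict_eq_zero.1 (ae_eq_bot.1 (eventually_false_iff_eq_bot.1 this)))

theorem enorm_sqrt_sq (a : ℝ) : ‖√a‖ₑ ^ 2 = ENNReal.ofReal a := by
  rw [Real.enorm_of_nonneg (Real.sqrt_nonneg a), ← ofReal_pow (Real.sqrt_nonneg a)]
  rcases le_total 0 a with ha | ha
  · rw [Real.sq_sqrt ha]
  · rw [Real.sqrt_eq_zero'.2 ha, ofReal_of_nonpos ha]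
    simp

noncomputable def compWeight (μ θ : ℝ → ℝ) (t : ℝ) : ℝ := √(θ t * densityJacobian μ θ t / t)

theorem measurable_compWeight {μ θ : ℝ → ℝ} (hμ : Measurable μ) (hθ : Measurable θ) :
    Measurable (compWeight μ θ) := by
  unfold compWeight densityJacobian
  have := measurable_deriv θ
  fun_prop

theorem compWeight_symm_mul_compWeight {α β : ℝ} {μ : ℝ → ℝ} (hα : 0 < α)
    (e : SelfDiffeoOn (Ioo α β)) {y : ℝ} (hy : y ∈ Ioo α β) (hμy : 0 < μ y)
    (hμey : 0 < μ (e.symm y)) :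
    compWeight μ e.symm y * compWeight μ e (e.symm y) = 1 := by
  have hy0 : 0 < y := hα.trans hy.1
  have hey0 : 0 < e.symm y := hα.trans (e.symm.mapsTo hy).1
  have hderiv := e.deriv_apply_symm_mul_deriv_symm isOpen_Ioo hy
  rw [compWeight, compWeight, ← Real.sqrt_mul (by unfold densityJacobian; positivity),
    densityJacobian, densityJacobian, e.apply_symm_apply hy, ← Real.sqrt_one]
  congr 1
  field_simp
  rw [← abs_mul, mul_comm, hderiv, abs_one]

section CompOperator

variable {α β : ℝ} {μ : ℝ → ℝ} (hα : 0 < α) (hμ : Measurable μ) (hsupp : μ.support ⊆ Ioo α β)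
  (hpos : ∀ᵐ t ∂volume.restrict (Ioo α β), 0 < μ t)
include hα hμ hsupp hpos

theorem lintegral_mul_enorm_compWeight_mul_sq (e : SelfDiffeoOn (Ioo α β)) (f : ℝ → ℝ)
    (g : ℝ → ℝ≥0∞) :
    ∫⁻ t, g t * ‖compWeight μ e t * f (e t)‖ₑ ^ 2 ∂densityMeasure μ
      = ∫⁻ y, g (e.symm y) * ENNReal.ofReal (y / e.symm y) * ‖f y‖ₑ ^ 2 ∂densityMeasure μ := by
  conv_rhs => rw [lintegral_densityMeasure_eq_lintegral_comp isOpen_Ioo hμ hsupp hpos e]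
  refine lintegral_congr_ae ?_
  filter_upwards [ae_densityMeasure_mem hμ hsupp] with t ht
  have ht0 : 0 < t := hα.trans ht.1
  have het0 : 0 < e t := hα.trans (e.mapsTo ht).1
  rw [e.symm_apply_apply ht, enorm_mul, mul_pow, compWeight, enorm_sqrt_sq, mul_comm (e t),
    mul_div_assoc, ofReal_mul' (div_nonneg het0.le ht0.le)]
  ring

theorem lintegral_enorm_compWeight_mul_sq (e : SelfDiffeoOn (Ioo α β)) (f : ℝ → ℝ) :
    ∫⁻ t, ‖compWeight μ e t * f (e t)‖ₑ ^ 2 ∂densityMeasure μ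
      = ∫⁻ y, ENNReal.ofReal (y / e.symm y) * ‖f y‖ₑ ^ 2 ∂densityMeasure μ := by
  simpa using lintegral_mul_enorm_compWeight_mul_sq hα hμ hsupp hpos e f 1

theorem lintegral_ofReal_mul_enorm_compWeight_mul_sq (e : SelfDiffeoOn (Ioo α β)) (f : ℝ → ℝ) :
    ∫⁻ t, ENNReal.ofReal t * ‖compWeight μ e t * f (e t)‖ₑ ^ 2 ∂densityMeasure μ
      = ∫⁻ y, ENNReal.ofReal y * ‖f y‖ₑ ^ 2 ∂densityMeasure μ := by
  rw [lintegral_mul_enorm_compWeight_mul_sq hα hμ hsupp hpos e f ENNReal.ofReal]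
  refine lintegral_congr_ae ?_
  filter_upwards [ae_densityMeasure_mem hμ hsupp] with y hy
  have hy0 : 0 < e.symm y := hα.trans (e.symm.mapsTo hy).1
  rw [← ofReal_mul hy0.le, mul_div_cancel₀ _ hy0.ne']

theorem memLp_compWeight_mul (e : SelfDiffeoOn (Ioo α β)) (f : Lp ℝ 2 (densityMeasure μ)) :
    MemLp (fun t ↦ compWeight μ e t * f (e t)) 2 (densityMeasure μ) := by
  have hmeas : AEStronglyMeasurable (fun t ↦ compWeight μ e t * f (e t)) (densityMeasure μ) :=
    (measurable_compWeight hμ e.measurable).aestronglyMeasurable.mul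
      ((Lp.aestronglyMeasurable f).comp_quasiMeasurePreserving
        (e.quasiMeasurePreserving isOpen_Ioo hμ hsupp hpos))
  rw [memLp_two_iff_lintegral_lt_top hmeas, lintegral_enorm_compWeight_mul_sq hα hμ hsupp hpos]
  calc ∫⁻ y, ENNReal.ofReal (y / e.symm y) * ‖f y‖ₑ ^ 2 ∂densityMeasure μ
      ≤ ∫⁻ y, ENNReal.ofReal (β / α) * ‖f y‖ₑ ^ 2 ∂densityMeasure μ := by
        refine lintegral_mono_ae ?_
        filter_upwards [ae_densityMeasure_mem hμ hsupp] with y hy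
        have hey := e.symm.mapsTo hy
        gcongr ?_ * _
        exact ofReal_le_ofReal (div_le_div₀ (by linarith [hy.1, hy.2]) hy.2.le hα hey.1.le)
    _ < ∞ := by
        rw [lintegral_const_mul' _ _ ofReal_ne_top, ← Lp.sq_enorm_eq_lintegral]
        exact mul_lt_top ofReal_lt_top (pow_lt_top enorm_lt_top)

noncomputable def compOperator (e : SelfDiffeoOn (Ioo α β)) :
    Lp ℝ 2 (densityMeasure μ) →ₗ[ℝ] Lp ℝ 2 (densityMeasure μ) :=
  Lp.weightedComp (compWeight μ e) e (e.quasiMeasurePreserving isOpen_Ioo hμ hsupp hpos)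
    (memLp_compWeight_mul hα hμ hsupp hpos e)

theorem coeFn_compOperator (e : SelfDiffeoOn (Ioo α β)) (f : Lp ℝ 2 (densityMeasure μ)) :
    compOperator hα hμ hsupp hpos e f =ᵐ[densityMeasure μ] fun t ↦ compWeight μ e t * f (e t) :=
  Lp.coeFn_weightedComp f

theorem compOperator_symm_compOperator (e : SelfDiffeoOn (Ioo α β))
    (f : Lp ℝ 2 (densityMeasure μ)) :
    compOperator hα hμ hsupp hpos e.symm (compOperator hα hμ hsupp hpos e f) = f := by
  refine Lp.weightedComp_weightedComp_of_ae ?_ f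
  filter_upwards [ae_densityMeasure_mem hμ hsupp, ae_densityMeasure_pos hμ,
    (e.symm.quasiMeasurePreserving isOpen_Ioo hμ hsupp hpos).ae (ae_densityMeasure_pos hμ)]
    with y hy hμy hμey
  exact ⟨compWeight_symm_mul_compWeight hα e hy hμy hμey, e.apply_symm_apply hy⟩

noncomputable def compOperatorEquiv (e : SelfDiffeoOn (Ioo α β)) :
    Lp ℝ 2 (densityMeasure μ) ≃ₗ[ℝ] Lp ℝ 2 (densityMeasure μ) :=
  .ofLinearMap (compOperator hα hμ hsupp hpos e) (compOperator hα hμ hsupp hpos e.symm)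
    (LinearMap.ext (compOperator_symm_compOperator hα hμ hsupp hpos e.symm))
    (LinearMap.ext (compOperator_symm_compOperator hα hμ hsupp hpos e))

theorem lintegral_enorm_sq_compOperator (e : SelfDiffeoOn (Ioo α β))
    (f : Lp ℝ 2 (densityMeasure μ)) :
    ∫⁻ t, ‖compOperator hα hμ hsupp hpos e f t‖ₑ ^ 2 ∂densityMeasure μ
      = ∫⁻ y, ENNReal.ofReal (y / e.symm y) * ‖f y‖ₑ ^ 2 ∂densityMeasure μ := by
  rw [← lintegral_enorm_compWeight_mul_sq hα hμ hsupp hpos]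
  exact lintegral_congr_ae
    ((coeFn_compOperator hα hμ hsupp hpos e f).mono fun t ht ↦ by beta_reduce; rw [ht])

theorem integral_mul_sq_compOperator (e : SelfDiffeoOn (Ioo α β))
    (f : Lp ℝ 2 (densityMeasure μ)) :
    ∫ t, t * compOperator hα hμ hsupp hpos e f t ^ 2 ∂densityMeasure μ
      = ∫ t, t * f t ^ 2 ∂densityMeasure μ := by
  have hnonneg : ∀ᵐ t ∂densityMeasure μ, 0 ≤ t :=
    (ae_densityMeasure_mem hμ hsupp).mono fun t ht ↦ hα.le.trans ht.1.le
  rw [integral_mul_sq_eq_toReal_lintegral hnonneg (Lp.aestronglyMeasurable _),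
    integral_mul_sq_eq_toReal_lintegral hnonneg (Lp.aestronglyMeasurable _),
    ← lintegral_ofReal_mul_enorm_compWeight_mul_sq hα hμ hsupp hpos e f]
  exact congrArg _ (lintegral_congr_ae
    ((coeFn_compOperator hα hμ hsupp hpos e f).mono fun t ht ↦ by beta_reduce; rw [ht]))

theorem mapsTo_compOperator_ellipsoid (e : SelfDiffeoOn (Ioo α β)) :
    MapsTo (compOperator hα hμ hsupp hpos e) (ellipsoid _) (ellipsoid _) := fun f hf ↦ by
  simpa [ellipsoid, integral_mul_sq_compOperator] using hf

theorem norm_compOperator_lt (e : SelfDiffeoOn (Ioo α β))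
    (he : ∀ y ∈ Ioo α β, y < e.symm y) {f : Lp ℝ 2 (densityMeasure μ)} (hf : f ≠ 0) :
    ‖compOperator hα hμ hsupp hpos e f‖ < ‖f‖ := by
  refine Lp.norm_lt_of_lintegral_lt ?_
  rw [lintegral_enorm_sq_compOperator]
  refine Lp.lintegral_ofReal_mul_enorm_sq_lt ?_ hf
  filter_upwards [ae_densityMeasure_mem hμ hsupp] with y hy
  exact (div_lt_one (hα.trans (e.symm.mapsTo hy).1)).2 (he y hy)

end CompOperator

-- In the coordinate `(t - α) / (β - α) ∈ (0, 1)` this is `x ↦ x²`, with inverse `x ↦ √x`.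
noncomputable def squareDiffeo {α β : ℝ} (hαβ : α < β) : SelfDiffeoOn (Ioo α β) where
  toFun t := α + (t - α) ^ 2 / (β - α)
  invFun t := α + √((t - α) * (β - α))
  mapsTo t ht := by
    have hβα : 0 < β - α := sub_pos.2 hαβ
    have htα : 0 < t - α := sub_pos.2 ht.1
    constructor
    · have : 0 < (t - α) ^ 2 / (β - α) := by positivity
      linarith
    · have : (t - α) ^ 2 / (β - α) < β - α := by
        rw [div_lt_iff₀ hβα]; nlinarith [ht.2]
      linarith
  mapsTo_invFun t ht := by
    have hβα : 0 < β - α := sub_pos.2 hαβ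
    have htα : 0 < t - α := sub_pos.2 ht.1
    constructor
    · have : 0 < √((t - α) * (β - α)) := Real.sqrt_pos.2 (by positivity)
      linarith
    · have : √((t - α) * (β - α)) < β - α := by
        rw [Real.sqrt_lt' hβα]; nlinarith [ht.2]
      linarith
  left_inv t ht := by
    dsimp only
    rw [add_sub_cancel_left, div_mul_cancel₀ _ (sub_pos.2 hαβ).ne',
      Real.sqrt_sq (sub_pos.2 ht.1).le, add_sub_cancel]
  right_inv t ht := by
    dsimp only
    rw [add_sub_cancel_left, Real.sq_sqrt (mul_pos (sub_pos.2 ht.1) (sub_pos.2 hαβ)).le,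
      mul_div_cancel_right₀ _ (sub_pos.2 hαβ).ne', add_sub_cancel]
  differentiableOn := by fun_prop
  differentiableOn_invFun t ht :=
    ((((differentiableAt_id.sub_const α).mul_const (β - α)).sqrt
      (mul_pos (sub_pos.2 ht.1) (sub_pos.2 hαβ)).ne').const_add α).differentiableWithinAt
  measurable := by fun_prop
  measurable_invFun := by fun_prop

theorem lt_squareDiffeo_symm {α β : ℝ} (hαβ : α < β) {t : ℝ} (ht : t ∈ Ioo α β) :
    t < (squareDiffeo hαβ).symm t := by
  have : t - α < √((t - α) * (β - α)) := by
    rw [Real.lt_sqrt (sub_pos.2 ht.1).le]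
    nlinarith [ht.1, ht.2]
  change t < α + √((t - α) * (β - α))
  linarith

theorem ellipsoid_L2_density_not_LECPlastic_general
    (α β : ℝ) (hα : 0 < α) (hαβ : α < β)
    (μ : ℝ → ℝ)
    (hμint : Integrable μ)
    (hμsupp : Function.support μ ⊆ Set.Ioo α β)
    (hμpos : ∀ᵐ t ∂(volume.restrict (Set.Ioo α β)), 0 < μ t) :
    ¬ IsLECPlastic ℝ
      {f : Lp ℝ 2 (volume.withDensity fun t => ENNReal.ofReal (μ t)) |
        ∫ t : ℝ, t * (f t) ^ 2 ∂(volume.withDensity fun t => ENNReal.ofReal (μ t)) ≤ 1} := by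
  obtain ⟨μ₀, hμ₀, hsupp, hμμ₀⟩ :=
    hμint.aemeasurable.exists_measurable_support_subset_ae_eq measurableSet_Ioo hμsupp
  have hpos : ∀ᵐ t ∂volume.restrict (Ioo α β), 0 < μ₀ t := by
    filter_upwards [hμpos, ae_restrict_of_ae hμμ₀] with t ht hμt
    rwa [← hμt]
  have hν : (volume.withDensity fun t ↦ ENNReal.ofReal (μ t)) = densityMeasure μ₀ :=
    withDensity_congr_ae (hμμ₀.fun_comp ENNReal.ofReal)
  have : IsFiniteMeasure (densityMeasure μ₀) :=
    hν ▸ isFiniteMeasure_withDensity hμint.lintegral_lt_top.ne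
  have : NeZero (densityMeasure μ₀) := ⟨densityMeasure_ne_zero hμ₀ hpos (by simp [hαβ])⟩
  change ¬ IsLECPlastic ℝ (ellipsoid _)
  rw [hν]
  obtain ⟨f, hfE, hf0⟩ := exists_ne_zero_mem_ellipsoid (ν := densityMeasure μ₀)
  let e := squareDiffeo hαβ
  exact not_isLECPlastic_of_norm_lt (compOperatorEquiv hα hμ₀ hsupp hpos e)
    (mapsTo_compOperator_ellipsoid hα hμ₀ hsupp hpos e)
    (mapsTo_compOperator_ellipsoid hα hμ₀ hsupp hpos e.symm)
    (fun _ hf ↦ norm_compOperator_lt hα hμ₀ hsupp hpos e (fun _ ↦ lt_squareDiffeo_symm hαβ) hf)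
    zero_mem_ellipsoid hfE hf0

/-- Let `0 < α < β` and let `μ ∈ L¹(ℝ)` be a nonnegative density supported
in `(α, β)` and strictly positive a.e. on `(α, β)`. Then the ellipsoid
`E = {f ∈ L²(ℝ, μ(t)dt) : ∫ t |f t|² μ(t) dt ≤ 1}` generated by the multiplication
operator `(Af)(t) = t f(t)` is not LEC-plastic. -/
theorem ellipsoid_L2_density_not_LECPlastic
    (α β : ℝ) (hα : 0 < α) (hαβ : α < β)
    (μ : ℝ → ℝ) (hμnonneg : ∀ t, 0 ≤ μ t)
    (hμint : Integrable μ)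
    (hμsupp : Function.support μ ⊆ Set.Ioo α β)
    (hμpos : ∀ᵐ t ∂(volume.restrict (Set.Ioo α β)), 0 < μ t) :
    ¬ IsLECPlastic ℝ
      {f : Lp ℝ 2 (volume.withDensity fun t => ENNReal.ofReal (μ t)) |
        ∫ t : ℝ, t * (f t) ^ 2 ∂(volume.withDensity fun t => ENNReal.ofReal (μ t)) ≤ 1} :=
  ellipsoid_L2_density_not_LECPlastic_general α β hα hαβ μ hμint hμsupp hμpos
end

section
/- Let A be a bounded self-adjoint operator on a separable infinite-dimensional Hilbert space H with inf_{‖x‖=1} ⟨Ax, x⟩ > 0, let E = {x ∈ H : ⟨x, Ax⟩ ≤ 1} and S = {x ∈ H : ⟨x, Ax⟩ = 1}. Let T : H → H be a linear operator which maps E bijectively onto itself. Then T maps the whole of H bijectively onto itself and T(S) = S. If, moreover, the restriction of T to E is non-expansive, then ‖T‖ ≤ 1, i.e. ‖Tx‖ ≤ ‖x‖ for all x ∈ H. -/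
/-!
The ellipsoid `E` is absorbent, so a linear map that is injective (resp. surjective) on `E` is
injective (resp. surjective) everywhere, and non-expansiveness on `E` rescales to all of `H`.
The sphere `S` is the radial boundary of `E`: the points of `E` that leave `E` under every
dilation by a scalar of norm `> 1`. This description uses only `E` and scalar multiplication,
so a linear bijection with `T⁻¹(E) = E` maps `S` onto `S`.
-/

open Set Filter Bornology

section Absorbent

variable {𝕜 V W : Type*} [NontriviallyNormedField 𝕜]

theorem Absorbent.exists_smul_mem [AddCommGroup V] [Module 𝕜 V] {E : Set V}
    (hE : Absorbent 𝕜 E) (x : V) : ∃ c : 𝕜, c ≠ 0 ∧ c • x ∈ E :=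
  let ⟨c, hcx, hc⟩ := ((absorbent_iff_inv_smul.1 hE x).and (eventually_ne_cobounded 0)).exists
  ⟨c⁻¹, inv_ne_zero hc, hcx⟩

variable [AddCommGroup V] [Module 𝕜 V] [AddCommGroup W] [Module 𝕜 W] {T : V →ₗ[𝕜] W}

theorem LinearMap.injective_of_injOn_absorbent {E : Set V} (hE : Absorbent 𝕜 E)
    (hT : InjOn T E) : Function.Injective T := by
  refine (injective_iff_map_eq_zero T).2 fun x hx => ?_
  obtain ⟨c, hc, hcx⟩ := hE.exists_smul_mem x
  have : c • x = 0 := hT hcx hE.zero_mem (by simp [hx])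
  exact (smul_eq_zero.1 this).resolve_left hc

theorem LinearMap.surjective_of_surjOn_absorbent {E : Set V} {F : Set W} (hF : Absorbent 𝕜 F)
    (hT : SurjOn T E F) : Function.Surjective T :=
  hF.subset_range_iff_surjective.1 (hT.trans (image_subset_range _ _))

end Absorbent

theorem LinearMap.norm_map_le_of_absorbent {𝕜 V W : Type*} [NontriviallyNormedField 𝕜]
    [NormedAddCommGroup V] [NormedSpace 𝕜 V] [NormedAddCommGroup W] [NormedSpace 𝕜 W]
    {E : Set V} {T : V →ₗ[𝕜] W} (hE : Absorbent 𝕜 E)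
    (hT : ∀ x ∈ E, ∀ y ∈ E, ‖T x - T y‖ ≤ ‖x - y‖) (x : V) : ‖T x‖ ≤ ‖x‖ := by
  obtain ⟨c, hc, hcx⟩ := hE.exists_smul_mem x
  have h := hT _ hcx 0 hE.zero_mem
  rw [map_zero, sub_zero, sub_zero, map_smul, norm_smul, norm_smul] at h
  exact le_of_mul_le_mul_left h (norm_pos_iff.2 hc)

def radialBoundary (𝕜 : Type*) {V : Type*} [Norm 𝕜] [SMul 𝕜 V] (E : Set V) : Set V :=
  {x ∈ E | ∀ c : 𝕜, 1 < ‖c‖ → c • x ∉ E}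

theorem LinearMap.image_radialBoundary {𝕜 V W : Type*} [NormedField 𝕜] [AddCommGroup V]
    [Module 𝕜 V] [AddCommGroup W] [Module 𝕜 W] {E : Set V} {F : Set W} {T : V →ₗ[𝕜] W}
    (hEF : T ⁻¹' F = E) (hT : Function.Surjective T) :
    T '' radialBoundary 𝕜 E = radialBoundary 𝕜 F := by
  have hmem : ∀ y, T y ∈ F ↔ y ∈ E := fun y => Set.ext_iff.1 hEF y
  have hpre : T ⁻¹' radialBoundary 𝕜 F = radialBoundary 𝕜 E := by
    ext x
    simp only [radialBoundary, mem_preimage, Set.mem_ofPred_eq, ← map_smul, hmem]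
  rw [← hpre, image_preimage_eq _ hT]

theorem exists_one_lt_sq_mul_le_one {a : ℝ} (ha : a < 1) : ∃ r : ℝ, 1 < r ∧ r ^ 2 * a ≤ 1 := by
  rcases le_or_gt a 0 with ha₀ | ha₀
  · exact ⟨2, one_lt_two, by nlinarith⟩
  · refine ⟨2 / (1 + a), (one_lt_div (by linarith)).2 (by linarith), ?_⟩
    rw [div_pow, div_mul_eq_mul_div, div_le_one (by positivity)]
    nlinarith [sq_nonneg (1 - a)]

section Quadratic

variable {𝕜 V : Type*} [RCLike 𝕜] [AddCommGroup V] [Module 𝕜 V] {q : V → ℝ}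

theorem absorbent_setOf_le_one (hq : ∀ (c : 𝕜) x, q (c • x) = ‖c‖ ^ 2 * q x) :
    Absorbent 𝕜 {x | q x ≤ 1} := by
  refine absorbent_iff_inv_smul.2 fun x => ?_
  filter_upwards [(tendsto_pow_atTop two_ne_zero).comp tendsto_norm_cobounded_atTop
    |>.eventually_ge_atTop (q x)] with c hc
  rw [hq, norm_inv, inv_pow, inv_mul_eq_div]
  exact div_le_one_of_le₀ hc (by positivity)

theorem radialBoundary_setOf_le_one (hq : ∀ (c : 𝕜) x, q (c • x) = ‖c‖ ^ 2 * q x) :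
    radialBoundary 𝕜 {x | q x ≤ 1} = {x | q x = 1} := by
  ext x
  simp only [radialBoundary, Set.mem_ofPred_eq, hq, not_le]
  constructor
  · rintro ⟨hle, hgt⟩
    by_contra hne
    obtain ⟨r, hr, hra⟩ := exists_one_lt_sq_mul_le_one (lt_of_le_of_ne hle hne)
    have := hgt r (by rwa [RCLike.norm_ofReal, abs_of_pos (one_pos.trans hr)])
    rw [RCLike.norm_ofReal, sq_abs] at this
    exact this.not_ge hra
  · intro h
    refine ⟨h.le, fun c hc => ?_⟩
    rw [h, mul_one]
    exact one_lt_pow₀ hc two_ne_zero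

end Quadratic

theorem ContinuousLinearMap.re_inner_smul_apply_smul {𝕜 H : Type*} [RCLike 𝕜]
    [NormedAddCommGroup H] [InnerProductSpace 𝕜 H] (A : H →L[𝕜] H) (c : 𝕜) (x : H) :
    RCLike.re (inner 𝕜 (c • x) (A (c • x))) = ‖c‖ ^ 2 * RCLike.re (inner 𝕜 x (A x)) := by
  rw [inner_re_symm, inner_re_symm x]
  exact A.reApplyInnerSelf_smul x

theorem linear_bijection_of_ellipsoid_general
    {𝕜 H : Type*} [RCLike 𝕜] [NormedAddCommGroup H] [InnerProductSpace 𝕜 H]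
    (A : H →L[𝕜] H)
    (T : H →ₗ[𝕜] H)
    (hT : Set.BijOn T {x : H | RCLike.re (inner 𝕜 x (A x) : 𝕜) ≤ 1}
      {x : H | RCLike.re (inner 𝕜 x (A x) : 𝕜) ≤ 1}) :
    Function.Bijective T ∧
    T '' {x : H | RCLike.re (inner 𝕜 x (A x) : 𝕜) = 1}
      = {x : H | RCLike.re (inner 𝕜 x (A x) : 𝕜) = 1} ∧
    ((∀ x ∈ {x : H | RCLike.re (inner 𝕜 x (A x) : 𝕜) ≤ 1},
        ∀ y ∈ {x : H | RCLike.re (inner 𝕜 x (A x) : 𝕜) ≤ 1}, ‖T x - T y‖ ≤ ‖x - y‖) →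
      ∀ x : H, ‖T x‖ ≤ ‖x‖) := by
  set E := {x : H | RCLike.re (inner 𝕜 x (A x) : 𝕜) ≤ 1}
  have hq := A.re_inner_smul_apply_smul
  have hE : Absorbent 𝕜 E := absorbent_setOf_le_one hq
  have hinj := T.injective_of_injOn_absorbent hE hT.injOn
  have hsurj := T.surjective_of_surjOn_absorbent hE hT.surjOn
  have hpre : T ⁻¹' E = E := (congrArg (T ⁻¹' ·) hT.image_eq).symm.trans (hinj.preimage_image E)
  refine ⟨⟨hinj, hsurj⟩, ?_, T.norm_map_le_of_absorbent hE⟩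
  rw [← radialBoundary_setOf_le_one hq]
  exact T.image_radialBoundary hpre hsurj

/-- Let `A` be a bounded self-adjoint operator (positively bounded below on
the sphere) on a separable infinite-dimensional Hilbert space `H`, let
`E = {x | ⟨x, Ax⟩ ≤ 1}` and `S = {x | ⟨x, Ax⟩ = 1}`. If a linear operator `T : H → H` maps
`E` bijectively onto itself, then `T` is a bijection of `H` and `T(S) = S`; if moreover `T`
is non-expansive on `E`, then `‖T x‖ ≤ ‖x‖` for all `x ∈ H`. -/
theorem linear_bijection_of_ellipsoid
    {𝕜 H : Type*} [RCLike 𝕜] [NormedAddCommGroup H] [InnerProductSpace 𝕜 H]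
    [CompleteSpace H] [TopologicalSpace.SeparableSpace H]
    (hinf : ¬ FiniteDimensional 𝕜 H)
    (A : H →L[𝕜] H) (hA : IsSelfAdjoint A)
    (hpos : ∃ c : ℝ, 0 < c ∧ ∀ x : H, ‖x‖ = 1 → c ≤ RCLike.re (inner 𝕜 (A x) x : 𝕜))
    (T : H →ₗ[𝕜] H)
    (hT : Set.BijOn T {x : H | RCLike.re (inner 𝕜 x (A x) : 𝕜) ≤ 1}
      {x : H | RCLike.re (inner 𝕜 x (A x) : 𝕜) ≤ 1}) :
    Function.Bijective T ∧
    T '' {x : H | RCLike.re (inner 𝕜 x (A x) : 𝕜) = 1}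
      = {x : H | RCLike.re (inner 𝕜 x (A x) : 𝕜) = 1} ∧
    ((∀ x ∈ {x : H | RCLike.re (inner 𝕜 x (A x) : 𝕜) ≤ 1},
        ∀ y ∈ {x : H | RCLike.re (inner 𝕜 x (A x) : 𝕜) ≤ 1}, ‖T x - T y‖ ≤ ‖x - y‖) →
      ∀ x : H, ‖T x‖ ≤ ‖x‖) :=
  linear_bijection_of_ellipsoid_general A T hT
end

section
/- Let A be a bounded self-adjoint operator on a separable infinite-dimensional Hilbert space H with inf_{‖x‖=1} ⟨Ax, x⟩ > 0, whose eigenvectors span a dense subspace of H (i.e. σ(A) = σ_pp(A) ⊂ (0, ∞)). Suppose the set of eigenvalues of A has a maximal element R whose eigenspace H_R = Ker(A − R) is finite-dimensional. Let T : H → H be a linear operator which maps the ellipsoid E = {x ∈ H : ⟨x, Ax⟩ ≤ 1} bijectively onto itself and whose restriction to E is non-expansive. Then T(H_R) = H_R, T(H_R ∩ E) = H_R ∩ E, and the restriction of T to H_R is a bijective isometry. -/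
/-!
Write `q x = re ⟪A x, x⟫`, so that `E = {q ≤ 1}`. As `E` is absorbing and `T` is linear, `T` is
injective and `T x ∈ E ↔ x ∈ E`; by homogeneity this gives `q ∘ T = q`, and non-expansiveness on
`E` gives `‖T x‖ ≤ ‖x‖`. Density of the eigenvectors gives `q x ≤ R ‖x‖²` everywhere. For
`z ∈ H_R` we get `R ‖z‖² = q z = q (T z) ≤ R ‖T z‖² ≤ R ‖z‖²`, so `T` is isometric on `H_R` and
`T z` maximises the Rayleigh quotient, hence is an eigenvector for `R`. Finally, an injective
endomorphism of the finite-dimensional `H_R` is onto.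
-/

open Module.End Set RCLike

lemma eq_of_forall_pos_mul_le_one_iff {a b : ℝ} (ha : 0 ≤ a) (hb : 0 ≤ b)
    (h : ∀ s : ℝ, 0 < s → (s * a ≤ 1 ↔ s * b ≤ 1)) : a = b := by
  rcases (add_nonneg ha hb).eq_or_lt with hab | hab
  · linarith
  have key := h (2 / (a + b)) (by positivity)
  rw [div_mul_eq_mul_div, div_mul_eq_mul_div, div_le_one hab, div_le_one hab] at key
  rcases le_total a b with hle | hle
  · linarith [key.1 (by linarith)]
  · linarith [key.2 (by linarith)]

namespace ContinuousLinearMap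

variable {𝕜 H : Type*} [RCLike 𝕜] [NormedAddCommGroup H] [InnerProductSpace 𝕜 H]
  {A : H →L[𝕜] H}

lemma reApplyInnerSelf_of_mem_eigenspace {μ : 𝕜} {x : H}
    (hx : x ∈ eigenspace (A : H →ₗ[𝕜] H) μ) : A.reApplyInnerSelf x = re μ * ‖x‖ ^ 2 := by
  have hAx : A x = μ • x := mem_eigenspace_iff.1 hx
  rw [reApplyInnerSelf_apply, hAx, inner_smul_left, inner_self_eq_norm_sq_to_K, ← ofReal_pow,
    re_mul_ofReal, conj_re]

lemma reApplyInnerSelf_le_of_mem_eigenspace (hA : (A : H →ₗ[𝕜] H).IsSymmetric) {R : ℝ}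
    (hR : ∀ μ : ℝ, HasEigenvalue (A : H →ₗ[𝕜] H) μ → μ ≤ R) {μ : 𝕜} {x : H}
    (hx : x ∈ eigenspace (A : H →ₗ[𝕜] H) μ) : A.reApplyInnerSelf x ≤ R * ‖x‖ ^ 2 := by
  rcases eq_or_ne x 0 with rfl | hx0
  · simp [reApplyInnerSelf_apply]
  have hμ : HasEigenvalue (A : H →ₗ[𝕜] H) μ := hasEigenvalue_of_hasEigenvector ⟨hx, hx0⟩
  have hμ_real : ((re μ : ℝ) : 𝕜) = μ := conj_eq_iff_re.1 (hA.conj_eigenvalue_eq_self hμ)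
  rw [reApplyInnerSelf_of_mem_eigenspace hx]
  gcongr
  rw [← hμ_real] at hμ
  exact hR _ hμ

lemma reApplyInnerSelf_le_of_mem_iSup_eigenspace (hA : (A : H →ₗ[𝕜] H).IsSymmetric) {R : ℝ}
    (hR : ∀ μ : ℝ, HasEigenvalue (A : H →ₗ[𝕜] H) μ → μ ≤ R) {x : H}
    (hx : x ∈ ⨆ μ : 𝕜, eigenspace (A : H →ₗ[𝕜] H) μ) : A.reApplyInnerSelf x ≤ R * ‖x‖ ^ 2 := by
  obtain ⟨f, hf, rfl⟩ := (Submodule.mem_iSup_iff_exists_finsupp _ _).1 hx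
  have hV := hA.orthogonalFamily_eigenspaces
  let v : ∀ μ, eigenspace (A : H →ₗ[𝕜] H) μ := fun μ => ⟨f μ, hf μ⟩
  let Av : ∀ μ, eigenspace (A : H →ₗ[𝕜] H) μ := fun μ =>
    ⟨A (f μ), (mem_eigenspace_iff.1 (hf μ) : A (f μ) = _) ▸ Submodule.smul_mem _ μ (hf μ)⟩
  have hsum : f.sum (fun _ y => y) = ∑ μ ∈ f.support, (eigenspace _ μ).subtypeₗᵢ (v μ) := rfl
  have hAsum : A (f.sum fun _ y => y) = ∑ μ ∈ f.support, (eigenspace _ μ).subtypeₗᵢ (Av μ) := by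
    simp [hsum, v, Av, map_sum]
  have hq : A.reApplyInnerSelf (f.sum fun _ y => y)
      = ∑ μ ∈ f.support, A.reApplyInnerSelf (f μ) := by
    rw [reApplyInnerSelf_apply, hAsum, hsum, hV.inner_sum, map_sum]
    rfl
  rw [hq, hsum, hV.norm_sum, Finset.mul_sum]
  exact Finset.sum_le_sum fun μ _ => reApplyInnerSelf_le_of_mem_eigenspace hA hR (hf μ)

lemma reApplyInnerSelf_le_of_dense_iSup_eigenspace (hA : (A : H →ₗ[𝕜] H).IsSymmetric) {R : ℝ}
    (hR : ∀ μ : ℝ, HasEigenvalue (A : H →ₗ[𝕜] H) μ → μ ≤ R)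
    (hdense : (⨆ μ : 𝕜, eigenspace (A : H →ₗ[𝕜] H) μ).topologicalClosure = ⊤) (x : H) :
    A.reApplyInnerSelf x ≤ R * ‖x‖ ^ 2 := by
  have hclosed : IsClosed {x : H | A.reApplyInnerSelf x ≤ R * ‖x‖ ^ 2} :=
    isClosed_le A.reApplyInnerSelf_continuous (by fun_prop)
  have hx : x ∈ closure ((⨆ μ : 𝕜, eigenspace (A : H →ₗ[𝕜] H) μ : Submodule 𝕜 H) : Set H) := by
    rw [← Submodule.topologicalClosure_coe, hdense]
    trivial
  exact hclosed.closure_subset_iff.2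
    (fun _ hy => reApplyInnerSelf_le_of_mem_iSup_eigenspace hA hR hy) hx

lemma mem_eigenspace_of_reApplyInnerSelf_eq [CompleteSpace H] (hA : IsSelfAdjoint A) {R : ℝ}
    (hle : ∀ x, A.reApplyInnerSelf x ≤ R * ‖x‖ ^ 2) {y : H}
    (hy : A.reApplyInnerSelf y = R * ‖y‖ ^ 2) : y ∈ eigenspace (A : H →ₗ[𝕜] H) (R : 𝕜) := by
  rcases eq_or_ne y 0 with rfl | hy0
  · exact zero_mem _
  have hmax : IsMaxOn A.reApplyInnerSelf (Metric.sphere 0 ‖y‖) y := fun x hx => by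
    rw [mem_sphere_zero_iff_norm] at hx
    simpa [hx, hy] using hle x
  have hRay : A.rayleighQuotient y = R := by
    rw [rayleighQuotient, hy, mul_div_cancel_right₀ _ (by positivity)]
  rw [mem_eigenspace_iff, ← hRay]
  exact hA.eq_smul_self_of_isLocalExtrOn (Or.inr hmax.localize)

lemma reApplyInnerSelf_pos (hA : ∀ x : H, ‖x‖ = 1 → 0 < A.reApplyInnerSelf x) {x : H}
    (hx : x ≠ 0) : 0 < A.reApplyInnerSelf x := by
  have hunit := hA _ (norm_smul_inv_norm (𝕜 := 𝕜) hx)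
  rw [reApplyInnerSelf_smul] at hunit
  exact pos_of_mul_pos_right hunit (by positivity)

def ellipsoid (A : H →L[𝕜] H) : Set H := {x | re (inner 𝕜 x (A x)) ≤ 1}

lemma mem_ellipsoid_iff {x : H} : x ∈ A.ellipsoid ↔ A.reApplyInnerSelf x ≤ 1 := by
  rw [reApplyInnerSelf_apply, inner_re_symm]
  rfl

lemma smul_mem_ellipsoid_iff {c : 𝕜} {x : H} :
    c • x ∈ A.ellipsoid ↔ ‖c‖ ^ 2 * A.reApplyInnerSelf x ≤ 1 := by
  rw [mem_ellipsoid_iff, reApplyInnerSelf_smul]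

lemma zero_mem_ellipsoid : (0 : H) ∈ A.ellipsoid := by
  simp [mem_ellipsoid_iff, reApplyInnerSelf_apply]

lemma exists_smul_mem_ellipsoid (x : H) : ∃ t : ℝ, 0 < t ∧ (t : 𝕜) • x ∈ A.ellipsoid := by
  set t := (|A.reApplyInnerSelf x| + 1)⁻¹
  have ht : 0 < t := by positivity
  have ht1 : t ≤ 1 := inv_le_one_of_one_le₀ (by linarith [abs_nonneg (A.reApplyInnerSelf x)])
  have hteq : t * (|A.reApplyInnerSelf x| + 1) = 1 := inv_mul_cancel₀ (by positivity)
  refine ⟨t, ht, smul_mem_ellipsoid_iff.2 ?_⟩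
  rw [norm_ofReal, abs_of_pos ht]
  nlinarith [le_abs_self (A.reApplyInnerSelf x), abs_nonneg (A.reApplyInnerSelf x)]

variable {T : H →ₗ[𝕜] H}

lemma injective_of_bijOn_ellipsoid (hT : BijOn T A.ellipsoid A.ellipsoid) :
    Function.Injective T := by
  refine (injective_iff_map_eq_zero T).2 fun z hz => ?_
  obtain ⟨t, ht, hmem⟩ := exists_smul_mem_ellipsoid (A := A) z
  have : (t : 𝕜) • z = 0 := hT.injOn hmem zero_mem_ellipsoid (by simp [hz])
  exact (smul_eq_zero.1 this).resolve_left (by exact_mod_cast ht.ne')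

lemma map_mem_ellipsoid_iff (hT : BijOn T A.ellipsoid A.ellipsoid) {x : H} :
    T x ∈ A.ellipsoid ↔ x ∈ A.ellipsoid := by
  refine ⟨fun h => ?_, fun h => hT.mapsTo h⟩
  obtain ⟨y, hy, hyx⟩ := hT.surjOn h
  rwa [← injective_of_bijOn_ellipsoid hT hyx]

lemma norm_map_le_of_nonexpansiveOn_ellipsoid
    (hT : ∀ x ∈ A.ellipsoid, ∀ y ∈ A.ellipsoid, ‖T x - T y‖ ≤ ‖x - y‖) (x : H) : ‖T x‖ ≤ ‖x‖ := by
  obtain ⟨t, ht, hmem⟩ := exists_smul_mem_ellipsoid (A := A) x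
  have := hT _ hmem 0 zero_mem_ellipsoid
  rw [map_zero, sub_zero, sub_zero, map_smul, norm_smul, norm_smul] at this
  exact le_of_mul_le_mul_left this (norm_pos_iff.2 (ofReal_ne_zero.2 ht.ne'))

lemma reApplyInnerSelf_map_of_bijOn_ellipsoid (hA : ∀ x, 0 ≤ A.reApplyInnerSelf x)
    (hT : BijOn T A.ellipsoid A.ellipsoid) (x : H) :
    A.reApplyInnerSelf (T x) = A.reApplyInnerSelf x := by
  refine eq_of_forall_pos_mul_le_one_iff (hA _) (hA _) fun s hs => ?_
  have h := map_mem_ellipsoid_iff hT (x := (√s : 𝕜) • x)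
  rwa [map_smul, smul_mem_ellipsoid_iff, smul_mem_ellipsoid_iff, norm_ofReal,
    abs_of_nonneg (Real.sqrt_nonneg s), Real.sq_sqrt hs.le] at h

lemma map_mem_eigenspace_and_norm_map_eq [CompleteSpace H] (hA : IsSelfAdjoint A)
    (hA_pos : ∀ x ≠ 0, 0 < A.reApplyInnerSelf x) {R : ℝ}
    (hle : ∀ x, A.reApplyInnerSelf x ≤ R * ‖x‖ ^ 2)
    (hqT : ∀ x, A.reApplyInnerSelf (T x) = A.reApplyInnerSelf x) (hnorm : ∀ x, ‖T x‖ ≤ ‖x‖)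
    {z : H} (hz : z ∈ eigenspace (A : H →ₗ[𝕜] H) (R : 𝕜)) :
    T z ∈ eigenspace (A : H →ₗ[𝕜] H) (R : 𝕜) ∧ ‖T z‖ = ‖z‖ := by
  rcases eq_or_ne z 0 with rfl | hz0
  · simp
  have hqz : A.reApplyInnerSelf z = R * ‖z‖ ^ 2 := by
    simpa using reApplyInnerSelf_of_mem_eigenspace hz
  have hR : 0 < R := pos_of_mul_pos_left (hqz ▸ hA_pos z hz0) (by positivity)
  have hnorm_eq : ‖T z‖ = ‖z‖ := by
    refine le_antisymm (hnorm z) ((sq_le_sq₀ (norm_nonneg _) (norm_nonneg _)).1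
      (le_of_mul_le_mul_left ?_ hR))
    rw [← hqz, ← hqT]
    exact hle (T z)
  refine ⟨mem_eigenspace_of_reApplyInnerSelf_eq hA hle ?_, hnorm_eq⟩
  rw [hqT, hqz, hnorm_eq]

end ContinuousLinearMap

open ContinuousLinearMap

theorem max_eigenspace_invariant_general
    {𝕜 H : Type*} [RCLike 𝕜] [NormedAddCommGroup H] [InnerProductSpace 𝕜 H]
    [CompleteSpace H]
    (A : H →L[𝕜] H) (hA : IsSelfAdjoint A)
    (hpos : ∃ c : ℝ, 0 < c ∧ ∀ x : H, ‖x‖ = 1 → c ≤ RCLike.re (inner 𝕜 (A x) x : 𝕜))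
    (hdense : (⨆ μ : 𝕜, Module.End.eigenspace (A : H →ₗ[𝕜] H) μ).topologicalClosure = ⊤)
    (R : ℝ)
    (hRmax : ∀ μ : ℝ, Module.End.HasEigenvalue (A : H →ₗ[𝕜] H) (μ : 𝕜) → μ ≤ R)
    (hfd : FiniteDimensional 𝕜 (Module.End.eigenspace (A : H →ₗ[𝕜] H) (R : 𝕜)))
    (T : H →ₗ[𝕜] H)
    (hTbij : Set.BijOn T {x : H | RCLike.re (inner 𝕜 x (A x) : 𝕜) ≤ 1}
      {x : H | RCLike.re (inner 𝕜 x (A x) : 𝕜) ≤ 1})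
    (hTne : ∀ x ∈ {x : H | RCLike.re (inner 𝕜 x (A x) : 𝕜) ≤ 1},
      ∀ y ∈ {x : H | RCLike.re (inner 𝕜 x (A x) : 𝕜) ≤ 1}, ‖T x - T y‖ ≤ ‖x - y‖) :
    T '' (Module.End.eigenspace (A : H →ₗ[𝕜] H) (R : 𝕜) : Set H)
      = (Module.End.eigenspace (A : H →ₗ[𝕜] H) (R : 𝕜) : Set H) ∧
    T '' ((Module.End.eigenspace (A : H →ₗ[𝕜] H) (R : 𝕜) : Set H)
        ∩ {x : H | RCLike.re (inner 𝕜 x (A x) : 𝕜) ≤ 1})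
      = (Module.End.eigenspace (A : H →ₗ[𝕜] H) (R : 𝕜) : Set H)
        ∩ {x : H | RCLike.re (inner 𝕜 x (A x) : 𝕜) ≤ 1} ∧
    Set.BijOn T (Module.End.eigenspace (A : H →ₗ[𝕜] H) (R : 𝕜) : Set H)
      (Module.End.eigenspace (A : H →ₗ[𝕜] H) (R : 𝕜) : Set H) ∧
    ∀ x ∈ (Module.End.eigenspace (A : H →ₗ[𝕜] H) (R : 𝕜) : Set H),
      ∀ y ∈ (Module.End.eigenspace (A : H →ₗ[𝕜] H) (R : 𝕜) : Set H),
        ‖T x - T y‖ = ‖x - y‖ := by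
  obtain ⟨c, hc, hcA⟩ := hpos
  have hA_pos : ∀ x ≠ 0, 0 < A.reApplyInnerSelf x :=
    fun _ => reApplyInnerSelf_pos fun x hx => hc.trans_le (hcA x hx)
  have hA_nonneg : ∀ x, 0 ≤ A.reApplyInnerSelf x := fun x => by
    rcases eq_or_ne x 0 with rfl | hx
    · simp [reApplyInnerSelf_apply]
    · exact (hA_pos x hx).le
  set P := Module.End.eigenspace (A : H →ₗ[𝕜] H) (R : 𝕜)
  have hinj : Function.Injective T := injective_of_bijOn_ellipsoid hTbij
  have hstep : ∀ z ∈ P, T z ∈ P ∧ ‖T z‖ = ‖z‖ := fun _ =>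
    map_mem_eigenspace_and_norm_map_eq hA hA_pos
      (reApplyInnerSelf_le_of_dense_iSup_eigenspace hA.isSymmetric hRmax hdense)
      (reApplyInnerSelf_map_of_bijOn_ellipsoid hA_nonneg hTbij)
      (norm_map_le_of_nonexpansiveOn_ellipsoid hTne)
  have hmaps : MapsTo T P P := fun z hz => (hstep z hz).1
  have hbij : BijOn T P P := ⟨hmaps, hinj.injOn, (LinearMap.injOn_iff_surjOn hmaps).1 hinj.injOn⟩
  refine ⟨hbij.image_eq, ?_, hbij, fun x hx y hy => ?_⟩
  · rw [image_inter hinj, hbij.image_eq, hTbij.image_eq]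
  · rw [← map_sub]
    exact (hstep _ (sub_mem hx hy)).2

/-- **Statement 9.** Let `A` be a bounded self-adjoint operator (positively bounded below
on the sphere) on a separable infinite-dimensional Hilbert space `H`, whose eigenvectors
span a dense subspace of `H`. Suppose the set of eigenvalues has a maximal element `R`
whose eigenspace `H_R = Ker(A - R)` is finite-dimensional. If a linear operator `T`
maps the ellipsoid `E = {x | ⟨x, Ax⟩ ≤ 1}` bijectively onto itself and is non-expansive
on `E`, then `T(H_R) = H_R`, `T(H_R ∩ E) = H_R ∩ E`, and `T` restricted to `H_R` is a
bijective isometry. -/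
theorem max_eigenspace_invariant
    {𝕜 H : Type*} [RCLike 𝕜] [NormedAddCommGroup H] [InnerProductSpace 𝕜 H]
    [CompleteSpace H] [TopologicalSpace.SeparableSpace H]
    (hinf : ¬ FiniteDimensional 𝕜 H)
    (A : H →L[𝕜] H) (hA : IsSelfAdjoint A)
    (hpos : ∃ c : ℝ, 0 < c ∧ ∀ x : H, ‖x‖ = 1 → c ≤ RCLike.re (inner 𝕜 (A x) x : 𝕜))
    (hdense : (⨆ μ : 𝕜, Module.End.eigenspace (A : H →ₗ[𝕜] H) μ).topologicalClosure = ⊤)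
    (R : ℝ)
    (hR : Module.End.HasEigenvalue (A : H →ₗ[𝕜] H) (R : 𝕜))
    (hRmax : ∀ μ : ℝ, Module.End.HasEigenvalue (A : H →ₗ[𝕜] H) (μ : 𝕜) → μ ≤ R)
    (hfd : FiniteDimensional 𝕜 (Module.End.eigenspace (A : H →ₗ[𝕜] H) (R : 𝕜)))
    (T : H →ₗ[𝕜] H)
    (hTbij : Set.BijOn T {x : H | RCLike.re (inner 𝕜 x (A x) : 𝕜) ≤ 1}
      {x : H | RCLike.re (inner 𝕜 x (A x) : 𝕜) ≤ 1})
    (hTne : ∀ x ∈ {x : H | RCLike.re (inner 𝕜 x (A x) : 𝕜) ≤ 1},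
      ∀ y ∈ {x : H | RCLike.re (inner 𝕜 x (A x) : 𝕜) ≤ 1}, ‖T x - T y‖ ≤ ‖x - y‖) :
    T '' (Module.End.eigenspace (A : H →ₗ[𝕜] H) (R : 𝕜) : Set H)
      = (Module.End.eigenspace (A : H →ₗ[𝕜] H) (R : 𝕜) : Set H) ∧
    T '' ((Module.End.eigenspace (A : H →ₗ[𝕜] H) (R : 𝕜) : Set H)
        ∩ {x : H | RCLike.re (inner 𝕜 x (A x) : 𝕜) ≤ 1})
      = (Module.End.eigenspace (A : H →ₗ[𝕜] H) (R : 𝕜) : Set H)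
        ∩ {x : H | RCLike.re (inner 𝕜 x (A x) : 𝕜) ≤ 1} ∧
    Set.BijOn T (Module.End.eigenspace (A : H →ₗ[𝕜] H) (R : 𝕜) : Set H)
      (Module.End.eigenspace (A : H →ₗ[𝕜] H) (R : 𝕜) : Set H) ∧
    ∀ x ∈ (Module.End.eigenspace (A : H →ₗ[𝕜] H) (R : 𝕜) : Set H),
      ∀ y ∈ (Module.End.eigenspace (A : H →ₗ[𝕜] H) (R : 𝕜) : Set H),
        ‖T x - T y‖ = ‖x - y‖ :=
  max_eigenspace_invariant_general A hA hpos hdense R hRmax hfd T hTbij hTne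
end

section
/- Let A be a bounded self-adjoint operator on a separable infinite-dimensional Hilbert space H with inf_{‖x‖=1} ⟨Ax, x⟩ > 0, and suppose that every subset of the set of eigenvalues σ_p(A) consisting of more than one element either has a maximum whose eigenspace is finite-dimensional or has a minimum whose eigenspace is finite-dimensional. Then there exists τ > 0 such that: (a) every nonempty subset of A⁺ := σ_p(A) ∩ (τ, +∞) has a maximal element; (b) every nonempty subset of A⁻ := σ_p(A) ∩ (0, τ) has a minimal element; and (c) every eigenvalue in A⁺ ∪ A⁻ has a finite-dimensional eigenspace. -/
/-!
Call an eigenvalue good when its eigenspace is finite-dimensional. If `D₁, D₂ ⊆ σ_p(A)`, `D₁` has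
no good greatest element and `D₂` no good least element, then `D₁ ≤ D₂` pointwise: for `e ∈ D₁`,
`x ∈ D₂` with `x < e`, the set `{w ∈ D₁ | x < w} ∪ {w ∈ D₂ | w < e}` would have neither a good
maximum nor a good minimum. A bad eigenvalue `l` lies on both sides (take `D₁ = D₂ = {l}`).
Since `σ_p(A) ⊆ [c, ‖A‖]`, where `c > 0` bounds `⟨Ax, x⟩` below on the unit sphere, a cut
`τ ≥ c` between the two sides exists, and any failure of the conclusion would put a point on the
wrong side of `τ`.
-/

open Set

section GoodExtrema

variable {α : Type*}

def HasGoodExtremum [LE α] (good : α → Prop) (S : Set α) : Prop :=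
  ∀ B ⊆ S, B.Nontrivial → (∃ m, IsGreatest B m ∧ good m) ∨ (∃ m, IsLeast B m ∧ good m)

def noGoodMaxPoints [LE α] (good : α → Prop) (S : Set α) : Set α :=
  {e | ∃ D ⊆ S, (¬ ∃ m, IsGreatest D m ∧ good m) ∧ e ∈ D}

def noGoodMinPoints [LE α] (good : α → Prop) (S : Set α) : Set α :=
  {x | ∃ D ⊆ S, (¬ ∃ m, IsLeast D m ∧ good m) ∧ x ∈ D}

variable {good : α → Prop} {S : Set α}

section LE

variable [LE α]

theorem noGoodMaxPoints_subset : noGoodMaxPoints good S ⊆ S :=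
  fun _ ⟨_, hDS, _, he⟩ ↦ hDS he

theorem noGoodMinPoints_subset : noGoodMinPoints good S ⊆ S :=
  fun _ ⟨_, hDS, _, hx⟩ ↦ hDS hx

theorem mem_noGoodMaxPoints_of_not_good {a : α} (ha : a ∈ S) (hg : ¬ good a) :
    a ∈ noGoodMaxPoints good S :=
  ⟨{a}, singleton_subset_iff.2 ha, fun ⟨_, hm, hgm⟩ ↦ hg (hm.1 ▸ hgm), rfl⟩

theorem mem_noGoodMinPoints_of_not_good {a : α} (ha : a ∈ S) (hg : ¬ good a) :
    a ∈ noGoodMinPoints good S :=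
  ⟨{a}, singleton_subset_iff.2 ha, fun ⟨_, hm, hgm⟩ ↦ hg (hm.1 ▸ hgm), rfl⟩

end LE

theorem HasGoodExtremum.le_of_mem_noGoodMaxPoints_of_mem_noGoodMinPoints [LinearOrder α]
    (hS : HasGoodExtremum good S) {e x : α} (he : e ∈ noGoodMaxPoints good S)
    (hx : x ∈ noGoodMinPoints good S) : e ≤ x := by
  obtain ⟨D₁, hD₁S, hD₁, heD₁⟩ := he
  obtain ⟨D₂, hD₂S, hD₂, hxD₂⟩ := hx
  by_contra! hxe
  set B := {w | w ∈ D₁ ∧ x < w} ∪ {w | w ∈ D₂ ∧ w < e}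
  have heB : e ∈ B := Or.inl ⟨heD₁, hxe⟩
  have hxB : x ∈ B := Or.inr ⟨hxD₂, hxe⟩
  have hBS : B ⊆ S := union_subset (fun w hw ↦ hD₁S hw.1) (fun w hw ↦ hD₂S hw.1)
  rcases hS B hBS ⟨e, heB, x, hxB, hxe.ne'⟩ with ⟨m, ⟨hmB, hub⟩, hm⟩ | ⟨m, ⟨hmB, hlb⟩, hm⟩
  · rcases hmB with ⟨hmD₁, hxm⟩ | ⟨-, hme⟩
    · refine hD₁ ⟨m, ⟨hmD₁, fun b hb ↦ ?_⟩, hm⟩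
      by_contra! hmb
      exact (hub (Or.inl ⟨hb, hxm.trans hmb⟩)).not_gt hmb
    · exact (hub heB).not_gt hme
  · rcases hmB with ⟨-, hxm⟩ | ⟨hmD₂, hme⟩
    · exact (hlb hxB).not_gt hxm
    · refine hD₂ ⟨m, ⟨hmD₂, fun b hb ↦ ?_⟩, hm⟩
      by_contra! hbm
      exact (hlb (Or.inr ⟨hb, hbm.trans hme⟩)).not_gt hbm

theorem HasGoodExtremum.exists_cut [ConditionallyCompleteLinearOrder α]
    (hS : HasGoodExtremum good S) (hbdd : BddAbove S) {c : α} (hc : S ⊆ Ici c) :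
    ∃ τ, c ≤ τ ∧
      (∀ D ⊆ S ∩ Ioi τ, D.Nonempty → ∃ m, IsGreatest D m) ∧
      (∀ D ⊆ S ∩ Iio τ, D.Nonempty → ∃ m, IsLeast D m) ∧
      ∀ a ∈ S, a ≠ τ → good a := by
  have hbdd' : BddAbove (insert c (noGoodMaxPoints good S)) :=
    (hbdd.mono noGoodMaxPoints_subset).insert c
  set τ := sSup (insert c (noGoodMaxPoints good S))
  have le_τ : ∀ e ∈ noGoodMaxPoints good S, e ≤ τ :=
    fun e he ↦ le_csSup hbdd' (mem_insert_of_mem c he)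
  have τ_le : ∀ x ∈ noGoodMinPoints good S, τ ≤ x := by
    intro x hx
    refine csSup_le (insert_nonempty _ _) ?_
    rintro e (rfl | he)
    exacts [hc (noGoodMinPoints_subset hx),
      hS.le_of_mem_noGoodMaxPoints_of_mem_noGoodMinPoints he hx]
  refine ⟨τ, le_csSup hbdd' (mem_insert c _), ?_, ?_, ?_⟩
  · rintro D hD ⟨e, he⟩
    by_contra hD'
    exact (hD he).2.not_ge <|
      le_τ e ⟨D, hD.trans inter_subset_left, fun ⟨m, hm, _⟩ ↦ hD' ⟨m, hm⟩, he⟩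
  · rintro D hD ⟨x, hx⟩
    by_contra hD'
    exact (hD hx).2.not_ge <|
      τ_le x ⟨D, hD.trans inter_subset_left, fun ⟨m, hm, _⟩ ↦ hD' ⟨m, hm⟩, hx⟩
  · intro a ha hτ
    by_contra hg
    exact hτ <| le_antisymm (le_τ a (mem_noGoodMaxPoints_of_not_good ha hg))
      (τ_le a (mem_noGoodMinPoints_of_not_good ha hg))

end GoodExtrema

open Module.End

theorem norm_le_opNorm_of_hasEigenvalue {𝕜 E : Type*} [NontriviallyNormedField 𝕜]
    [NormedAddCommGroup E] [NormedSpace 𝕜 E] (A : E →L[𝕜] E) {μ : 𝕜}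
    (hμ : HasEigenvalue (A : E →ₗ[𝕜] E) μ) : ‖μ‖ ≤ ‖A‖ := by
  obtain ⟨x, hx⟩ := hμ.exists_hasEigenvector
  have hx0 : 0 < ‖x‖ := norm_pos_iff.2 hx.2
  refine le_of_mul_le_mul_right ?_ hx0
  calc ‖μ‖ * ‖x‖ = ‖A x‖ := by rw [← norm_smul, ← hx.apply_eq_smul]; rfl
    _ ≤ ‖A‖ * ‖x‖ := A.le_opNorm x

theorem le_of_hasEigenvalue_of_le_re_inner {𝕜 H : Type*} [RCLike 𝕜] [NormedAddCommGroup H]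
    [InnerProductSpace 𝕜 H] {T : H →ₗ[𝕜] H} {c μ : ℝ}
    (hc : ∀ x : H, ‖x‖ = 1 → c ≤ RCLike.re (inner 𝕜 (T x) x)) (hμ : HasEigenvalue T μ) :
    c ≤ μ := by
  obtain ⟨v, hv⟩ := hμ.exists_hasEigenvector
  set u : H := (‖v‖⁻¹ : 𝕜) • v
  have hu : ‖u‖ = 1 := norm_smul_inv_norm hv.2
  have hTu : T u = (μ : 𝕜) • u := by
    rw [map_smul, hv.apply_eq_smul, smul_comm]
  calc c ≤ RCLike.re (inner 𝕜 (T u) u) := hc u hu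
    _ = μ := by
      rw [inner_re_symm, inner_product_apply_eigenvector hTu, hu]
      simp

theorem exists_tau_well_ordering_eigenvalues_general
    {𝕜 H : Type*} [RCLike 𝕜] [NormedAddCommGroup H] [InnerProductSpace 𝕜 H]
    (A : H →L[𝕜] H)
    (hpos : ∃ c : ℝ, 0 < c ∧ ∀ x : H, ‖x‖ = 1 → c ≤ RCLike.re (inner 𝕜 (A x) x : 𝕜))
    (hcond : ∀ B ⊆ {μ : ℝ | Module.End.HasEigenvalue (A : H →ₗ[𝕜] H) (μ : 𝕜)},
      B.Nontrivial →
        ((∃ m ∈ B, (∀ b ∈ B, b ≤ m) ∧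
            FiniteDimensional 𝕜 (Module.End.eigenspace (A : H →ₗ[𝕜] H) (m : 𝕜))) ∨
         (∃ m ∈ B, (∀ b ∈ B, m ≤ b) ∧
            FiniteDimensional 𝕜 (Module.End.eigenspace (A : H →ₗ[𝕜] H) (m : 𝕜))))) :
    ∃ τ : ℝ, 0 < τ ∧
      (∀ D ⊆ {μ : ℝ | Module.End.HasEigenvalue (A : H →ₗ[𝕜] H) (μ : 𝕜)} ∩ Set.Ioi τ,
        D.Nonempty → ∃ m ∈ D, ∀ b ∈ D, b ≤ m) ∧
      (∀ D ⊆ {μ : ℝ | Module.End.HasEigenvalue (A : H →ₗ[𝕜] H) (μ : 𝕜)} ∩ Set.Ioo 0 τ,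
        D.Nonempty → ∃ m ∈ D, ∀ b ∈ D, m ≤ b) ∧
      (∀ μ ∈ {μ : ℝ | Module.End.HasEigenvalue (A : H →ₗ[𝕜] H) (μ : 𝕜)}
          ∩ (Set.Ioi τ ∪ Set.Ioo 0 τ),
        FiniteDimensional 𝕜 (Module.End.eigenspace (A : H →ₗ[𝕜] H) (μ : 𝕜))) := by
  obtain ⟨c, hc, hcA⟩ := hpos
  have hS : HasGoodExtremum (fun μ : ℝ ↦ FiniteDimensional 𝕜 (eigenspace (A : H →ₗ[𝕜] H) μ))
      {μ : ℝ | HasEigenvalue (A : H →ₗ[𝕜] H) μ} := fun B hB hBnt ↦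
    (hcond B hB hBnt).imp (fun ⟨m, hm, hub, hfin⟩ ↦ ⟨m, ⟨hm, hub⟩, hfin⟩)
      (fun ⟨m, hm, hlb, hfin⟩ ↦ ⟨m, ⟨hm, hlb⟩, hfin⟩)
  have hbdd : BddAbove {μ : ℝ | HasEigenvalue (A : H →ₗ[𝕜] H) μ} :=
    ⟨‖A‖, fun μ hμ ↦ (le_abs_self μ).trans (by simpa using norm_le_opNorm_of_hasEigenvalue A hμ)⟩
  obtain ⟨τ, hcτ, hmax, hmin, hgood⟩ :=
    hS.exists_cut hbdd fun μ hμ ↦ le_of_hasEigenvalue_of_le_re_inner hcA hμ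
  refine ⟨τ, hc.trans_le hcτ, fun D hD hD₀ ↦ hmax D hD hD₀,
    fun D hD hD₀ ↦ hmin D (hD.trans (inter_subset_inter_right _ Ioo_subset_Iio_self)) hD₀,
    fun μ hμ ↦ hgood μ hμ.1 ?_⟩
  rintro rfl
  exact hμ.2.elim (lt_irrefl μ) fun h ↦ lt_irrefl μ h.2

/-- **Claim 1.** Let `A` be a bounded self-adjoint operator (positively
bounded below on the sphere) on a separable infinite-dimensional Hilbert space `H`, such
that every subset of the set of eigenvalues of `A` with more than one element has either a
maximum of finite multiplicity or a minimum of finite multiplicity. Then there is `τ > 0`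
such that every nonempty subset of `A⁺ = σ_p(A) ∩ (τ, ∞)` has a maximal element, every
nonempty subset of `A⁻ = σ_p(A) ∩ (0, τ)` has a minimal element, and every eigenvalue in
`A⁺ ∪ A⁻` has finite-dimensional eigenspace. -/
theorem exists_tau_well_ordering_eigenvalues
    {𝕜 H : Type*} [RCLike 𝕜] [NormedAddCommGroup H] [InnerProductSpace 𝕜 H]
    [CompleteSpace H] [TopologicalSpace.SeparableSpace H]
    (hinf : ¬ FiniteDimensional 𝕜 H)
    (A : H →L[𝕜] H) (hA : IsSelfAdjoint A)
    (hpos : ∃ c : ℝ, 0 < c ∧ ∀ x : H, ‖x‖ = 1 → c ≤ RCLike.re (inner 𝕜 (A x) x : 𝕜))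
    (hcond : ∀ B ⊆ {μ : ℝ | Module.End.HasEigenvalue (A : H →ₗ[𝕜] H) (μ : 𝕜)},
      B.Nontrivial →
        ((∃ m ∈ B, (∀ b ∈ B, b ≤ m) ∧
            FiniteDimensional 𝕜 (Module.End.eigenspace (A : H →ₗ[𝕜] H) (m : 𝕜))) ∨
         (∃ m ∈ B, (∀ b ∈ B, m ≤ b) ∧
            FiniteDimensional 𝕜 (Module.End.eigenspace (A : H →ₗ[𝕜] H) (m : 𝕜))))) :
    ∃ τ : ℝ, 0 < τ ∧
      (∀ D ⊆ {μ : ℝ | Module.End.HasEigenvalue (A : H →ₗ[𝕜] H) (μ : 𝕜)} ∩ Set.Ioi τ,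
        D.Nonempty → ∃ m ∈ D, ∀ b ∈ D, b ≤ m) ∧
      (∀ D ⊆ {μ : ℝ | Module.End.HasEigenvalue (A : H →ₗ[𝕜] H) (μ : 𝕜)} ∩ Set.Ioo 0 τ,
        D.Nonempty → ∃ m ∈ D, ∀ b ∈ D, m ≤ b) ∧
      (∀ μ ∈ {μ : ℝ | Module.End.HasEigenvalue (A : H →ₗ[𝕜] H) (μ : 𝕜)}
          ∩ (Set.Ioi τ ∪ Set.Ioo 0 τ),
        FiniteDimensional 𝕜 (Module.End.eigenspace (A : H →ₗ[𝕜] H) (μ : 𝕜))) :=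
  exists_tau_well_ordering_eigenvalues_general A hpos hcond
end
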